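/- arXiv:2411.09939 — 10 statements merged into one kernel-verified Lean document; each statement's English description precedes it below -/
import Mathlib

section
/- Let C be a left-cancellative small category. If A and B are independent subsets of C (i.e., for distinct a, a' in A, a is not in a'C, and likewise for B) such that the union of the principal right ideals aC over a in A equals the union of the bC over b in B, then A ~ B (every a in A is equivalent to some b in B, meaning aC = bC, and vice versa) and |A| = |B|. -/
/-- A small category, modelled algebraically: a set of morphisms with source and
range maps and a (total, but only meaningful on composable pairs) composition. -/
structure CatStruct (C : Type*) where
  src : C → C
  rng : C → C
  comp : C → C → C
  src_src : ∀ a, src (src a) = src a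
  rng_src : ∀ a, rng (src a) = src a
  src_rng : ∀ a, src (rng a) = rng a
  rng_rng : ∀ a, rng (rng a) = rng a
  comp_src : ∀ a, comp a (src a) = a
  rng_comp_self : ∀ a, comp (rng a) a = a
  src_comp : ∀ a b, src a = rng b → src (comp a b) = src b
  rng_comp : ∀ a b, src a = rng b → rng (comp a b) = rng a
  assoc : ∀ a b c, src a = rng b → src b = rng c →
    comp (comp a b) c = comp a (comp b c)

namespace CatStruct

variable {C : Type*}

/-- The principal right ideal `aC`. -/
def ideal (𝒞 : CatStruct C) (a : C) : Set C :=
  {x | ∃ c, 𝒞.src a = 𝒞.rng c ∧ x = 𝒞.comp a c}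

/-- The principal right ideal of `a` relative to a subcategory `D`. -/
def idealIn (𝒞 : CatStruct C) (D : Set C) (a : C) : Set C :=
  {x | ∃ c ∈ D, 𝒞.src a = 𝒞.rng c ∧ x = 𝒞.comp a c}

def LeftCancellative (𝒞 : CatStruct C) : Prop :=
  ∀ a b c, 𝒞.src a = 𝒞.rng b → 𝒞.src a = 𝒞.rng c →
    𝒞.comp a b = 𝒞.comp a c → b = c

def FinitelyAligned (𝒞 : CatStruct C) : Prop :=
  ∀ a b : C, ∃ F : Finset C, 𝒞.ideal a ∩ 𝒞.ideal b = ⋃ c ∈ F, 𝒞.ideal c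

def IsInvertible (𝒞 : CatStruct C) (c : C) : Prop :=
  ∃ c', 𝒞.src c' = 𝒞.rng c ∧ 𝒞.rng c' = 𝒞.src c ∧
    𝒞.comp c c' = 𝒞.rng c ∧ 𝒞.comp c' c = 𝒞.src c

/-- `a ~ b` : there is an invertible `c` with `a = bc`. -/
def equivR (𝒞 : CatStruct C) (a b : C) : Prop :=
  ∃ c, 𝒞.IsInvertible c ∧ 𝒞.src b = 𝒞.rng c ∧ a = 𝒞.comp b c

def Independent (𝒞 : CatStruct C) (A : Set C) : Prop :=
  ∀ a ∈ A, ∀ a' ∈ A, a ≠ a' → a ∉ 𝒞.ideal a'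

end CatStruct


namespace CatStruct

lemma mem_ideal_self (𝒞 : CatStruct C) (a : C) : a ∈ 𝒞.ideal a :=
  ⟨𝒞.src a, (𝒞.rng_src a).symm, (𝒞.comp_src a).symm⟩

lemma ideal_subset (𝒞 : CatStruct C) {a x : C} (hx : x ∈ 𝒞.ideal a) :
    𝒞.ideal x ⊆ 𝒞.ideal a := by
  obtain ⟨c, hc, rfl⟩ := hx
  rintro y ⟨d, hd, rfl⟩
  rw [𝒞.src_comp a c hc] at hd
  exact ⟨𝒞.comp c d, by rw [𝒞.rng_comp c d hd]; exact hc, 𝒞.assoc a c d hc hd⟩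

end CatStruct

theorem independent_unions_equal {C : Type*} (𝒞 : CatStruct C)
    (hLC : 𝒞.LeftCancellative)
    (A B : Set C) (hA : 𝒞.Independent A) (hB : 𝒞.Independent B)
    (hU : (⋃ a ∈ A, 𝒞.ideal a) = ⋃ b ∈ B, 𝒞.ideal b) :
    (∀ a ∈ A, ∃ b ∈ B, 𝒞.ideal a = 𝒞.ideal b) ∧
    (∀ b ∈ B, ∃ a ∈ A, 𝒞.ideal b = 𝒞.ideal a) ∧
    Nonempty (A ≃ B) := by
  have uniqA : ∀ a ∈ A, ∀ a' ∈ A, 𝒞.ideal a = 𝒞.ideal a' → a = a' := by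
    intro a ha a' ha' h
    by_contra hne
    exact hA a ha a' ha' hne (h ▸ 𝒞.mem_ideal_self a)
  have uniqB : ∀ b ∈ B, ∀ b' ∈ B, 𝒞.ideal b = 𝒞.ideal b' → b = b' := by
    intro b hb b' hb' h
    by_contra hne
    exact hB b hb b' hb' hne (h ▸ 𝒞.mem_ideal_self b)
  have key : ∀ (X Y : Set C), 𝒞.Independent X →
      (⋃ a ∈ X, 𝒞.ideal a) = (⋃ b ∈ Y, 𝒞.ideal b) →
      ∀ a ∈ X, ∃ b ∈ Y, 𝒞.ideal a = 𝒞.ideal b := by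
    intro X Y hX hXY a ha
    have h1 : a ∈ ⋃ b ∈ Y, 𝒞.ideal b := by
      rw [← hXY]; exact Set.mem_biUnion ha (𝒞.mem_ideal_self a)
    obtain ⟨b, hb, hab⟩ := Set.mem_iUnion₂.mp h1
    have h2 : b ∈ ⋃ a' ∈ X, 𝒞.ideal a' := by
      rw [hXY]; exact Set.mem_biUnion hb (𝒞.mem_ideal_self b)
    obtain ⟨a', ha', hba'⟩ := Set.mem_iUnion₂.mp h2
    have sub1 : 𝒞.ideal a ⊆ 𝒞.ideal b := 𝒞.ideal_subset hab
    have sub2 : 𝒞.ideal b ⊆ 𝒞.ideal a' := 𝒞.ideal_subset hba'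
    have : a = a' := by
      by_contra hne
      exact hX a ha a' ha' hne (sub2 (sub1 (𝒞.mem_ideal_self a)))
    subst this
    exact ⟨b, hb, le_antisymm sub1 sub2⟩
  have h1 : ∀ a ∈ A, ∃ b ∈ B, 𝒞.ideal a = 𝒞.ideal b := key A B hA hU
  have h2 : ∀ b ∈ B, ∃ a ∈ A, 𝒞.ideal b = 𝒞.ideal a := key B A hB hU.symm
  refine ⟨h1, h2, ⟨?_⟩⟩
  have f : ∀ a : A, {b : B // 𝒞.ideal (a : C) = 𝒞.ideal (b : C)} := by
    intro a
    exact ⟨⟨(h1 a a.2).choose, (h1 a a.2).choose_spec.1⟩, (h1 a a.2).choose_spec.2⟩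
  have g : ∀ b : B, {a : A // 𝒞.ideal (b : C) = 𝒞.ideal (a : C)} := by
    intro b
    exact ⟨⟨(h2 b b.2).choose, (h2 b b.2).choose_spec.1⟩, (h2 b b.2).choose_spec.2⟩
  refine ⟨fun a => (f a).1, fun b => (g b).1, ?_, ?_⟩
  · intro a
    have := (f a).2.trans (g (f a).1).2
    exact Subtype.ext (uniqA _ (g (f a).1).1.2 _ a.2 this.symm)
  · intro b
    have := (g b).2.trans (f (g b).1).2
    exact Subtype.ext (uniqB _ (f (g b).1).1.2 _ b.2 this.symm)
end

section
/- Let Λ be a locally convex k-graph. If μ, ν in Λ^{≤n} and μΛ ∩ νΛ ≠ ∅, then μ = ν. More generally, if ν ∈ Λ^{≤n}, d(μ) ≤ n, and μΛ ∩ νΛ ≠ ∅, then ν ∈ μΛ. -/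
/-- A `k`-graph: a small category with an `ℕ^k`-valued degree functor satisfying
the unique factorisation property. -/
structure KGraph (k : ℕ) (C : Type*) extends CatStruct C where
  d : C → Fin k → ℕ
  d_comp : ∀ a b, src a = rng b → d (comp a b) = d a + d b
  factor : ∀ (lam : C) (m n : Fin k → ℕ), d lam = m + n →
    ∃! p : C × C, src p.1 = rng p.2 ∧ lam = comp p.1 p.2 ∧ d p.1 = m ∧ d p.2 = n

namespace KGraph

variable {k : ℕ} {C : Type*}

def LocallyConvex (Λ : KGraph k C) : Prop :=
  ∀ i j : Fin k, i ≠ j → ∀ e : C, Λ.d e = Pi.single i 1 →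
    (∃ f, Λ.rng f = Λ.rng e ∧ Λ.d f = Pi.single j 1) →
    ∃ f, Λ.rng f = Λ.src e ∧ Λ.d f = Pi.single j 1

/-- `Λ^{≤ n}`. -/
def LeSet (Λ : KGraph k C) (n : Fin k → ℕ) : Set C :=
  {lam | Λ.d lam ≤ n ∧ ∀ i : Fin k, Λ.d lam i < n i →
    ¬∃ e, Λ.rng e = Λ.src lam ∧ Λ.d e = Pi.single i 1}

end KGraph

namespace KGraph

variable {k : ℕ} {C : Type*}

lemma d_src_eq_zero (Λ : KGraph k C) (a : C) : Λ.d (Λ.toCatStruct.src a) = 0 := by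
  have h := Λ.d_comp a (Λ.toCatStruct.src a) (Λ.toCatStruct.rng_src a).symm
  rw [Λ.toCatStruct.comp_src] at h
  funext i
  have := congrFun h i
  simp [Pi.add_apply] at this ⊢
  omega

/-- key lemma: claim 2. -/
lemma key (Λ : KGraph k C) (n : Fin k → ℕ) (μ ν : C) (hν : ν ∈ Λ.LeSet n)
    (hμ : Λ.d μ ≤ n) (hne : (Λ.toCatStruct.ideal μ ∩ Λ.toCatStruct.ideal ν).Nonempty) :
    ν ∈ Λ.toCatStruct.ideal μ := by
  obtain ⟨x, ⟨α, hα1, hα2⟩, ⟨β, hβ1, hβ2⟩⟩ := hne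
  have hdx1 : Λ.d x = Λ.d μ + Λ.d α := by rw [hα2, Λ.d_comp _ _ hα1]
  have hdx2 : Λ.d x = Λ.d ν + Λ.d β := by rw [hβ2, Λ.d_comp _ _ hβ1]
  -- Step A : d μ ≤ d ν
  have hle : ∀ i, Λ.d μ i ≤ Λ.d ν i := by
    intro i
    by_contra hlt
    push_neg at hlt
    have hβi : 1 ≤ Λ.d β i := by
      have h1 := congrFun hdx1 i
      have h2 := congrFun hdx2 i
      simp [Pi.add_apply] at h1 h2
      omega
    have hfac : Λ.d β = Pi.single i 1 + (Λ.d β - Pi.single i 1) := by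
      funext j
      by_cases hji : j = i
      · subst hji; simp; omega
      · simp [Pi.single_apply, hji]
    obtain ⟨⟨e, β'⟩, ⟨hse, hβe, hde, _⟩, _⟩ := Λ.factor β _ _ hfac
    dsimp only at hse hβe hde
    refine hν.2 i ?_ ⟨e, ?_, hde⟩
    · exact lt_of_lt_of_le hlt (hμ i)
    · have : Λ.toCatStruct.rng (Λ.toCatStruct.comp e β') = Λ.toCatStruct.rng e :=
        Λ.toCatStruct.rng_comp e β' hse
      rw [← hβe] at this
      rw [this] at hβ1
      exact hβ1.symm
  -- Step B : factor ν at d μ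
  have hνfac : Λ.d ν = Λ.d μ + (Λ.d ν - Λ.d μ) := by
    funext j; have := hle j; simp [Pi.add_apply]; omega
  obtain ⟨⟨τ, σ⟩, ⟨hτσ, hνeq, hdτ, hdσ⟩, _⟩ := Λ.factor ν _ _ hνfac
  dsimp only at hτσ hνeq hdτ hdσ
  -- x = comp τ (comp σ β)
  have hsrcν : Λ.toCatStruct.src ν = Λ.toCatStruct.src σ := by
    rw [hνeq]; exact Λ.toCatStruct.src_comp τ σ hτσ
  have hσβ : Λ.toCatStruct.src σ = Λ.toCatStruct.rng β := by rw [← hsrcν]; exact hβ1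
  have hx : x = Λ.toCatStruct.comp τ (Λ.toCatStruct.comp σ β) := by
    rw [hβ2, hνeq, Λ.toCatStruct.assoc τ σ β hτσ hσβ]
  -- uniqueness of factorization of x at (d μ, d α)
  obtain ⟨p, _, hpu⟩ := Λ.factor x (Λ.d μ) (Λ.d α) hdx1
  have h1 : p = (μ, α) := (hpu (μ, α) ⟨hα1, hα2, rfl, rfl⟩).symm
  have h2 : p = (τ, Λ.toCatStruct.comp σ β) := by
    refine (hpu _ ⟨?_, hx, hdτ, ?_⟩).symm
    · rw [Λ.toCatStruct.rng_comp σ β hσβ]; exact hτσ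
    · rw [Λ.d_comp σ β hσβ, hdσ]
      funext j
      have h1 := congrFun hdx1 j
      have h2 := congrFun hdx2 j
      have := hle j
      simp [Pi.add_apply] at h1 h2 ⊢
      omega
  have hμτ : μ = τ := by
    have := h1.symm.trans h2
    exact congrArg Prod.fst this
  exact ⟨σ, by rw [hμτ]; exact hτσ, by rw [hμτ]; exact hνeq⟩

end KGraph

theorem le_extensions_equal {k : ℕ} {C : Type*} [Countable C] (Λ : KGraph k C)
    (hlc : Λ.LocallyConvex) :
    (∀ (n : Fin k → ℕ) (μ ν : C), μ ∈ Λ.LeSet n → ν ∈ Λ.LeSet n →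
      (Λ.toCatStruct.ideal μ ∩ Λ.toCatStruct.ideal ν).Nonempty → μ = ν) ∧
    (∀ (n : Fin k → ℕ) (μ ν : C), ν ∈ Λ.LeSet n → Λ.d μ ≤ n →
      (Λ.toCatStruct.ideal μ ∩ Λ.toCatStruct.ideal ν).Nonempty →
      ν ∈ Λ.toCatStruct.ideal μ) := by
  constructor
  · intro n μ ν hμ hν hne
    obtain ⟨c, hc1, hc2⟩ := Λ.key n μ ν hν hμ.1 hne
    obtain ⟨c', hc1', hc2'⟩ := Λ.key n ν μ hμ hν.1 ⟨hne.choose, hne.choose_spec.2, hne.choose_spec.1⟩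
    have hdν : Λ.d ν = Λ.d μ + Λ.d c := by rw [hc2, Λ.d_comp _ _ hc1]
    have hdμ : Λ.d μ = Λ.d ν + Λ.d c' := by rw [hc2', Λ.d_comp _ _ hc1']
    have hdc : Λ.d c = 0 := by
      funext j
      have h1 := congrFun hdν j
      have h2 := congrFun hdμ j
      simp [Pi.add_apply] at h1 h2 ⊢
      omega
    have hfac : Λ.d ν = Λ.d ν + 0 := by simp
    obtain ⟨p, _, hpu⟩ := Λ.factor ν (Λ.d ν) 0 hfac
    have h1 : p = (ν, Λ.toCatStruct.src ν) :=
      (hpu _ ⟨(Λ.toCatStruct.rng_src ν).symm, (Λ.toCatStruct.comp_src ν).symm, rfl,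
        Λ.d_src_eq_zero ν⟩).symm
    have h2 : p = (μ, c) := by
      refine (hpu _ ⟨hc1, hc2, ?_, hdc⟩).symm
      rw [hdν, hdc, add_zero]
    have := h1.symm.trans h2
    exact (congrArg Prod.fst this).symm
  · intro n μ ν hν hμ hne
    exact Λ.key n μ ν hν hμ hne
end

section
/- Let Λ be a locally convex k-graph. Then Λ^{≤m+n} = Λ^{≤m}Λ^{≤n} for all m, n ∈ ℕ^k; that is, every element of Λ^{≤m+n} factors as a product of an element of Λ^{≤m} followed by an element of Λ^{≤n}, and conversely every such composable product lies in Λ^{≤m+n}. -/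
/-!
Split `x ∈ Λ^{≤m+n}` at degree `d x ⊓ m` as `x = μν`. If an `i`-edge could be appended to `μ`
although `d(μ)ᵢ < mᵢ`, then `μ` has taken all of the `i`-degree of `x`, so `d(ν)ᵢ = 0`, and local
convexity pushes that `i`-edge along `ν`, one edge at a time, to `s(x)`, contradicting
`x ∈ Λ^{≤m+n}`. Conversely, an `i`-edge at the source of a composite `μν` factors back to an
`i`-edge at `r(μν)`, which gives `Λ^{≤m}Λ^{≤n} ⊆ Λ^{≤m+n}` without any convexity.
-/

lemma Pi.single_one_le_of_pos {ι : Type*} [DecidableEq ι] {f : ι → ℕ} {i : ι} (h : 0 < f i) :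
    Pi.single i 1 ≤ f := by
  intro j
  rcases eq_or_ne j i with rfl | hj
  · simpa using Nat.one_le_of_lt h
  · simp [hj]

namespace KGraph

variable {k : ℕ} {C : Type*} (Λ : KGraph k C)

/-- `vΛ^{eᵢ} ≠ ∅`. -/
def HasEdge (i : Fin k) (v : C) : Prop :=
  ∃ e, Λ.rng e = v ∧ Λ.d e = Pi.single i 1

lemma d_rng_eq_zero (a : C) : Λ.d (Λ.rng a) = 0 := by
  have h := Λ.d_comp (Λ.rng a) a (Λ.src_rng a)
  rw [Λ.rng_comp_self] at h
  exact add_eq_right.mp h.symm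

lemma d_src_eq_zero_s6 (a : C) : Λ.d (Λ.src a) = 0 := by
  have h := Λ.d_comp a (Λ.src a) (Λ.rng_src a).symm
  rw [Λ.comp_src] at h
  exact left_eq_add.mp h

/-- Both `r(a) a` and `a s(a)` factor `a` at degrees `(0, 0)`. -/
lemma src_eq_rng_of_d_eq_zero {a : C} (h : Λ.d a = 0) : Λ.src a = Λ.rng a := by
  obtain ⟨_, _, huniq⟩ := Λ.factor a 0 0 (by rw [h, add_zero])
  have h₁ := huniq (Λ.rng a, a) ⟨Λ.src_rng a, (Λ.rng_comp_self a).symm, Λ.d_rng_eq_zero a, h⟩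
  have h₂ := huniq (a, Λ.src a) ⟨(Λ.rng_src a).symm, (Λ.comp_src a).symm, h, Λ.d_src_eq_zero_s6 a⟩
  obtain ⟨hrng, hsrc⟩ := Prod.mk.inj (h₁.trans h₂.symm)
  exact hsrc.symm.trans hrng.symm

lemma exists_factor_of_le {lam : C} {p : Fin k → ℕ} (hp : p ≤ Λ.d lam) :
    ∃ μ ν, Λ.src μ = Λ.rng ν ∧ lam = Λ.comp μ ν ∧ Λ.d μ = p ∧ Λ.d ν = Λ.d lam - p := by
  obtain ⟨⟨μ, ν⟩, ⟨hcomp, rfl, hμ, hν⟩, -⟩ :=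
    Λ.factor lam p (Λ.d lam - p) (add_tsub_cancel_of_le hp).symm
  exact ⟨μ, ν, hcomp, rfl, hμ, hν⟩

lemma hasEdge_rng_of_pos {lam : C} {i : Fin k} (h : 0 < Λ.d lam i) :
    Λ.HasEdge i (Λ.rng lam) := by
  obtain ⟨e, _, hcomp, rfl, he, -⟩ := Λ.exists_factor_of_le (Pi.single_one_le_of_pos h)
  exact ⟨e, (Λ.rng_comp _ _ hcomp).symm, he⟩

lemma hasEdge_rng_of_hasEdge_src {ν : C} {i : Fin k} (h : Λ.HasEdge i (Λ.src ν)) :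
    Λ.HasEdge i (Λ.rng ν) := by
  obtain ⟨e, he, hde⟩ := h
  have hpos : 0 < Λ.d (Λ.comp ν e) i := by
    rw [Λ.d_comp ν e he.symm, hde]
    simp
  rw [← Λ.rng_comp ν e he.symm]
  exact Λ.hasEdge_rng_of_pos hpos

/-- Induction on `|d ν|`: split off the first edge of `ν`, of some colour `j ≠ i`, and apply local
convexity to it. -/
lemma hasEdge_src_of_hasEdge_rng (hlc : Λ.LocallyConvex) {ν : C} {i : Fin k}
    (hνi : Λ.d ν i = 0) (he : Λ.HasEdge i (Λ.rng ν)) : Λ.HasEdge i (Λ.src ν) := by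
  generalize hN : ∑ j, Λ.d ν j = N
  induction N generalizing ν with
  | zero =>
    have hν : Λ.d ν = 0 := funext fun j => Finset.sum_eq_zero_iff.mp hN j (Finset.mem_univ j)
    rwa [Λ.src_eq_rng_of_d_eq_zero hν]
  | succ N ih =>
    obtain ⟨j, -, hj⟩ := Finset.exists_ne_zero_of_sum_ne_zero (hN ▸ N.add_one_ne_zero)
    have hji : j ≠ i := by
      rintro rfl
      exact hj hνi
    obtain ⟨e, ν', hcomp, rfl, hde, -⟩ :=
      Λ.exists_factor_of_le (Pi.single_one_le_of_pos (Nat.pos_of_ne_zero hj))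
    have hd : Λ.d (Λ.comp e ν') = Pi.single j 1 + Λ.d ν' := by rw [Λ.d_comp _ _ hcomp, hde]
    have he' : Λ.HasEdge i (Λ.rng ν') :=
      hcomp ▸ hlc j i hji e hde (by rwa [Λ.rng_comp _ _ hcomp] at he)
    rw [Λ.src_comp _ _ hcomp]
    refine ih ?_ he' ?_
    · simpa [hd, hji.symm] using hνi
    · simp only [hd, Pi.add_apply, Finset.sum_add_distrib, Finset.sum_pi_single', Finset.mem_univ,
        if_true] at hN
      omega

lemma comp_mem_leSet_add {m n : Fin k → ℕ} {μ ν : C} (hμ : μ ∈ Λ.LeSet m)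
    (hν : ν ∈ Λ.LeSet n) (h : Λ.src μ = Λ.rng ν) : Λ.comp μ ν ∈ Λ.LeSet (m + n) := by
  have hd := Λ.d_comp μ ν h
  refine ⟨hd ▸ add_le_add hμ.1 hν.1, fun i hi he => ?_⟩
  rw [Λ.src_comp _ _ h] at he
  have hdi : Λ.d μ i + Λ.d ν i < m i + n i := by simpa [hd] using hi
  rcases (show Λ.d ν i ≤ n i from hν.1 i).lt_or_eq with hνi | hνi
  · exact hν.2 i hνi he
  · exact hμ.2 i (by omega) (h ▸ Λ.hasEdge_rng_of_hasEdge_src he)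

lemma exists_mem_leSet_comp_mem_leSet (hlc : Λ.LocallyConvex) {m n : Fin k → ℕ} {x : C}
    (hx : x ∈ Λ.LeSet (m + n)) :
    ∃ μ ∈ Λ.LeSet m, ∃ ν ∈ Λ.LeSet n, Λ.src μ = Λ.rng ν ∧ x = Λ.comp μ ν := by
  obtain ⟨μ, ν, hcomp, hxμν, hdμ, hdν⟩ := Λ.exists_factor_of_le (inf_le_left : Λ.d x ⊓ m ≤ Λ.d x)
  have hsrc : Λ.src x = Λ.src ν := hxμν ▸ Λ.src_comp _ _ hcomp
  have hdeg (i : Fin k) : Λ.d μ i = min (Λ.d x i) (m i) ∧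
      Λ.d ν i = Λ.d x i - min (Λ.d x i) (m i) ∧ Λ.d x i ≤ m i + n i :=
    ⟨congrFun hdμ i, congrFun hdν i, hx.1 i⟩
  refine ⟨μ, ⟨hdμ ▸ inf_le_right, fun i hi he => ?_⟩, ν,
    ⟨fun i => show Λ.d ν i ≤ n i by grind, fun i hi he => ?_⟩, hcomp, hxμν⟩
  · have hν0 : Λ.d ν i = 0 := by grind
    exact hx.2 i (show Λ.d x i < m i + n i by grind)
      (hsrc ▸ Λ.hasEdge_src_of_hasEdge_rng hlc hν0 (hcomp ▸ he))
  · exact hx.2 i (show Λ.d x i < m i + n i by grind) (hsrc ▸ he)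

end KGraph

theorem le_factorisation_general {k : ℕ} {C : Type*} (Λ : KGraph k C)
    (hlc : Λ.LocallyConvex) :
    ∀ m n : Fin k → ℕ,
      Λ.LeSet (m + n) =
        {x : C | ∃ μ ∈ Λ.LeSet m, ∃ ν ∈ Λ.LeSet n,
          Λ.src μ = Λ.rng ν ∧ x = Λ.comp μ ν} :=
  fun _ _ => Set.ext fun _ =>
    ⟨Λ.exists_mem_leSet_comp_mem_leSet hlc,
      fun ⟨_, hμ, _, hν, hcomp, hx⟩ => hx ▸ Λ.comp_mem_leSet_add hμ hν hcomp⟩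

theorem le_factorisation {k : ℕ} {C : Type*} [Countable C] (Λ : KGraph k C)
    (hlc : Λ.LocallyConvex) :
    ∀ m n : Fin k → ℕ,
      Λ.LeSet (m + n) =
        {x : C | ∃ μ ∈ Λ.LeSet m, ∃ ν ∈ Λ.LeSet n,
          Λ.src μ = Λ.rng ν ∧ x = Λ.comp μ ν} :=
  le_factorisation_general Λ hlc
end

section
/- Let G be a groupoid and C a finitely aligned left-cancellative small category such that (G, C) is a matched pair. Then the Zappa–Szép product C ⋈ G is left-cancellative and finitely aligned. Moreover, for c, g in the product, cg(C ⋈ G) = c(C ⋈ G), and if c_1(C ⋈ G) ∩ c_2(C ⋈ G) ≠ ∅ for c_1, c_2 ∈ C, then any finite F ⊆ C with c_1C ∩ c_2C = FC satisfies c_1(C ⋈ G) ∩ c_2(C ⋈ G) = F(C ⋈ G). -/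
/-- the Zappa–Szép product of a finitely aligned left-cancellative
small category by a groupoid, modelled as an ambient category `X` with wide
subcategories `Cset` (the category part) and `Gset` (the groupoid part) and
unique factorisation `X = Cset · Gset`. -/
theorem zappa_szep_by_groupoid_finitely_aligned {X : Type*} (𝒳 : CatStruct X)
    (Cset Gset : Set X)
    (hCunits : ∀ x : X, 𝒳.src x ∈ Cset ∧ 𝒳.rng x ∈ Cset)
    (hGunits : ∀ x : X, 𝒳.src x ∈ Gset ∧ 𝒳.rng x ∈ Gset)
    (hCcomp : ∀ a ∈ Cset, ∀ b ∈ Cset, 𝒳.src a = 𝒳.rng b → 𝒳.comp a b ∈ Cset)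
    (hGcomp : ∀ a ∈ Gset, ∀ b ∈ Gset, 𝒳.src a = 𝒳.rng b → 𝒳.comp a b ∈ Gset)
    (hfact : ∀ x : X, ∃! p : X × X, p.1 ∈ Cset ∧ p.2 ∈ Gset ∧
      𝒳.src p.1 = 𝒳.rng p.2 ∧ x = 𝒳.comp p.1 p.2)
    (hCLC : ∀ a ∈ Cset, ∀ b ∈ Cset, ∀ c ∈ Cset,
      𝒳.src a = 𝒳.rng b → 𝒳.src a = 𝒳.rng c → 𝒳.comp a b = 𝒳.comp a c → b = c)
    (hCFA : ∀ a ∈ Cset, ∀ b ∈ Cset, ∃ F : Finset X, ↑F ⊆ Cset ∧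
      𝒳.idealIn Cset a ∩ 𝒳.idealIn Cset b = ⋃ c ∈ F, 𝒳.idealIn Cset c)
    (hG : ∀ g ∈ Gset, ∃ g' ∈ Gset, 𝒳.src g' = 𝒳.rng g ∧ 𝒳.rng g' = 𝒳.src g ∧
      𝒳.comp g g' = 𝒳.rng g ∧ 𝒳.comp g' g = 𝒳.src g) :
    𝒳.LeftCancellative ∧ 𝒳.FinitelyAligned ∧
    (∀ c ∈ Cset, ∀ g ∈ Gset, 𝒳.src c = 𝒳.rng g →
      𝒳.ideal (𝒳.comp c g) = 𝒳.ideal c) ∧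
    (∀ c₁ ∈ Cset, ∀ c₂ ∈ Cset, (𝒳.ideal c₁ ∩ 𝒳.ideal c₂).Nonempty →
      ∀ F : Finset X, ↑F ⊆ Cset →
        𝒳.idealIn Cset c₁ ∩ 𝒳.idealIn Cset c₂ = (⋃ c ∈ F, 𝒳.idealIn Cset c) →
        𝒳.ideal c₁ ∩ 𝒳.ideal c₂ = ⋃ c ∈ F, 𝒳.ideal c) := by
  -- C-part cancellation inside X
  have cancelC : ∀ c ∈ Cset, ∀ z w : X, 𝒳.src c = 𝒳.rng z → 𝒳.src c = 𝒳.rng w →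
      𝒳.comp c z = 𝒳.comp c w → z = w := by
    intro c hc z w hz hw hzw
    obtain ⟨⟨cz, gz⟩, ⟨hcz, hgz, hsz, hez⟩, -⟩ := hfact z
    obtain ⟨⟨cw, gw⟩, ⟨hcw, hgw, hsw, hew⟩, -⟩ := hfact w
    have hrz : 𝒳.rng z = 𝒳.rng cz := by rw [hez, 𝒳.rng_comp _ _ hsz]
    have hrw : 𝒳.rng w = 𝒳.rng cw := by rw [hew, 𝒳.rng_comp _ _ hsw]
    have h1 : 𝒳.comp c z = 𝒳.comp (𝒳.comp c cz) gz := by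
      rw [hez, 𝒳.assoc _ _ _ (hz.trans hrz) hsz]
    have h2 : 𝒳.comp c w = 𝒳.comp (𝒳.comp c cw) gw := by
      rw [hew, 𝒳.assoc _ _ _ (hw.trans hrw) hsw]
    obtain ⟨p, -, hun⟩ := hfact (𝒳.comp c z)
    have hs1 : 𝒳.src (𝒳.comp c cz) = 𝒳.rng gz := by
      rw [𝒳.src_comp _ _ (hz.trans hrz)]; exact hsz
    have hs2 : 𝒳.src (𝒳.comp c cw) = 𝒳.rng gw := by
      rw [𝒳.src_comp _ _ (hw.trans hrw)]; exact hsw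
    have heq : (𝒳.comp c cz, gz) = ((𝒳.comp c cw, gw) : X × X) := by
      have e1 := hun (𝒳.comp c cz, gz)
        ⟨hCcomp c hc cz hcz (hz.trans hrz), hgz, hs1, h1⟩
      have e2 := hun (𝒳.comp c cw, gw)
        ⟨hCcomp c hc cw hcw (hw.trans hrw), hgw, hs2, hzw.trans h2⟩
      exact e1.trans e2.symm
    have hcc : cz = cw :=
      hCLC c hc cz hcz cw hcw (hz.trans hrz) (hw.trans hrw)
        (congrArg Prod.fst heq)
    rw [hez, hew, hcc, congrArg Prod.snd heq]
  -- G-part cancellation inside X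
  have cancelG : ∀ g ∈ Gset, ∀ z w : X, 𝒳.src g = 𝒳.rng z → 𝒳.src g = 𝒳.rng w →
      𝒳.comp g z = 𝒳.comp g w → z = w := by
    intro g hg z w hz hw hzw
    obtain ⟨g', -, hs', hr', -, hg'g⟩ := hG g hg
    calc z = 𝒳.comp (𝒳.comp g' g) z := by rw [hg'g, hz, 𝒳.rng_comp_self]
      _ = 𝒳.comp g' (𝒳.comp g z) := 𝒳.assoc _ _ _ hs' hz
      _ = 𝒳.comp g' (𝒳.comp g w) := by rw [hzw]
      _ = 𝒳.comp (𝒳.comp g' g) w := (𝒳.assoc _ _ _ hs' hw).symm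
      _ = w := by rw [hg'g, hw, 𝒳.rng_comp_self]
  have LC : 𝒳.LeftCancellative := by
    intro a b c hb hc habc
    obtain ⟨⟨ca, ga⟩, ⟨hca, hga, hsa, hea⟩, -⟩ := hfact a
    have hsga : 𝒳.src a = 𝒳.src ga := by rw [hea, 𝒳.src_comp _ _ hsa]
    have h1 : 𝒳.comp a b = 𝒳.comp ca (𝒳.comp ga b) := by
      rw [hea, 𝒳.assoc _ _ _ hsa (hsga ▸ hb)]
    have h2 : 𝒳.comp a c = 𝒳.comp ca (𝒳.comp ga c) := by
      rw [hea, 𝒳.assoc _ _ _ hsa (hsga ▸ hc)]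
    have hrb : 𝒳.src ca = 𝒳.rng (𝒳.comp ga b) := by
      rw [𝒳.rng_comp _ _ (hsga ▸ hb)]; exact hsa
    have hrc : 𝒳.src ca = 𝒳.rng (𝒳.comp ga c) := by
      rw [𝒳.rng_comp _ _ (hsga ▸ hc)]; exact hsa
    have := cancelC ca hca _ _ hrb hrc (h1 ▸ h2 ▸ habc)
    exact cancelG ga hga b c (hsga ▸ hb) (hsga ▸ hc) this
  -- ideal of a product is contained in ideal of the left factor
  have idealSub : ∀ a b : X, 𝒳.src a = 𝒳.rng b →
      𝒳.ideal (𝒳.comp a b) ⊆ 𝒳.ideal a := by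
    rintro a b hab x ⟨d, hd, rfl⟩
    rw [𝒳.src_comp _ _ hab] at hd
    refine ⟨𝒳.comp b d, ?_, (𝒳.assoc _ _ _ hab hd)⟩
    rw [𝒳.rng_comp _ _ hd]; exact hab
  -- ideal (c g) = ideal c
  have idealEq : ∀ c ∈ Cset, ∀ g ∈ Gset, 𝒳.src c = 𝒳.rng g →
      𝒳.ideal (𝒳.comp c g) = 𝒳.ideal c := by
    intro c hc g hg hcg
    refine Set.Subset.antisymm (idealSub c g hcg) ?_
    rintro x ⟨d, hd, rfl⟩
    obtain ⟨g', -, hs', hr', hgg', -⟩ := hG g hg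
    have hs'd : 𝒳.src g' = 𝒳.rng d := by rw [hs', ← hcg]; exact hd
    refine ⟨𝒳.comp g' d, ?_, ?_⟩
    · rw [𝒳.src_comp _ _ hcg, 𝒳.rng_comp _ _ hs'd, hr']
    · have : 𝒳.comp g (𝒳.comp g' d) = d := by
        rw [← 𝒳.assoc _ _ _ hr'.symm hs'd, hgg',
          hcg.symm.trans hd, 𝒳.rng_comp_self]
      rw [𝒳.assoc _ _ _ hcg (by rw [𝒳.rng_comp _ _ hs'd, hr']), this]
  -- the refinement lemma (no nonemptiness needed)
  have key : ∀ c₁ ∈ Cset, ∀ c₂ ∈ Cset, ∀ F : Finset X, ↑F ⊆ Cset →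
      𝒳.idealIn Cset c₁ ∩ 𝒳.idealIn Cset c₂ = (⋃ c ∈ F, 𝒳.idealIn Cset c) →
      𝒳.ideal c₁ ∩ 𝒳.ideal c₂ = ⋃ c ∈ F, 𝒳.ideal c := by
    intro c₁ h₁ c₂ h₂ F hF hEq
    ext x
    simp only [Set.mem_inter_iff, Set.mem_iUnion]
    constructor
    · rintro ⟨⟨y, hy, rfl⟩, ⟨z, hz, hxz⟩⟩
      obtain ⟨⟨dy, gy⟩, ⟨hdy, hgy, hsy, hey⟩, -⟩ := hfact y
      obtain ⟨⟨dz, gz⟩, ⟨hdz, hgz, hsz, hez⟩, -⟩ := hfact z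
      have hry : 𝒳.rng y = 𝒳.rng dy := by rw [hey, 𝒳.rng_comp _ _ hsy]
      have hrz : 𝒳.rng z = 𝒳.rng dz := by rw [hez, 𝒳.rng_comp _ _ hsz]
      have e1 : 𝒳.comp c₁ y = 𝒳.comp (𝒳.comp c₁ dy) gy := by
        rw [hey, 𝒳.assoc _ _ _ (hy.trans hry) hsy]
      have e2 : 𝒳.comp c₂ z = 𝒳.comp (𝒳.comp c₂ dz) gz := by
        rw [hez, 𝒳.assoc _ _ _ (hz.trans hrz) hsz]
      obtain ⟨p, -, hun⟩ := hfact (𝒳.comp c₁ y)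
      have hu1 := hun (𝒳.comp c₁ dy, gy)
        ⟨hCcomp c₁ h₁ dy hdy (hy.trans hry), hgy,
          by rw [𝒳.src_comp _ _ (hy.trans hry)]; exact hsy, e1⟩
      have hu2 := hun (𝒳.comp c₂ dz, gz)
        ⟨hCcomp c₂ h₂ dz hdz (hz.trans hrz), hgz,
          by rw [𝒳.src_comp _ _ (hz.trans hrz)]; exact hsz, by rw [hxz]; exact e2⟩
      have heq := hu1.trans hu2.symm
      have hw : 𝒳.comp c₁ dy ∈ 𝒳.idealIn Cset c₁ ∩ 𝒳.idealIn Cset c₂ := by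
        constructor
        · exact ⟨dy, hdy, hy.trans hry, rfl⟩
        · exact ⟨dz, hdz, hz.trans hrz, congrArg Prod.fst heq⟩
      rw [hEq] at hw
      simp only [Set.mem_iUnion] at hw
      obtain ⟨c, hcF, e, heC, hse, hwe⟩ := hw
      have hscd : 𝒳.src (𝒳.comp c₁ dy) = 𝒳.rng gy := by
        rw [𝒳.src_comp _ _ (hy.trans hry)]; exact hsy
      have hse2 : 𝒳.src e = 𝒳.rng gy := by
        rw [← 𝒳.src_comp _ _ hse, ← hwe]; exact hscd
      refine ⟨c, hcF, 𝒳.comp e gy, ?_, ?_⟩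
      · rw [𝒳.rng_comp _ _ hse2]; exact hse
      · rw [e1, hwe, 𝒳.assoc _ _ _ hse hse2]
    · rintro ⟨c, hcF, d, hd, rfl⟩
      have hcC : c ∈ Cset := hF hcF
      have hcI : c ∈ 𝒳.idealIn Cset c₁ ∩ 𝒳.idealIn Cset c₂ := by
        rw [hEq]
        simp only [Set.mem_iUnion]
        exact ⟨c, hcF, 𝒳.src c, (hCunits c).1, (𝒳.rng_src c).symm,
          (𝒳.comp_src c).symm⟩
      obtain ⟨⟨e₁, he₁, hs₁, hce₁⟩, ⟨e₂, he₂, hs₂, hce₂⟩⟩ := hcI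
      constructor
      · exact idealSub c₁ e₁ hs₁ (hce₁ ▸ ⟨d, hd, rfl⟩)
      · exact idealSub c₂ e₂ hs₂ (hce₂ ▸ ⟨d, hd, rfl⟩)
  refine ⟨LC, ?_, idealEq, fun c₁ h₁ c₂ h₂ _ F hF hEq => key c₁ h₁ c₂ h₂ F hF hEq⟩
  -- finite alignment
  intro a b
  obtain ⟨⟨ca, ga⟩, ⟨hca, hga, hsa, hea⟩, -⟩ := hfact a
  obtain ⟨⟨cb, gb⟩, ⟨hcb, hgb, hsb, heb⟩, -⟩ := hfact b
  obtain ⟨F, hF, hEq⟩ := hCFA ca hca cb hcb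
  refine ⟨F, ?_⟩
  rw [hea, heb, idealEq ca hca ga hga hsa, idealEq cb hcb gb hgb hsb]
  exact key ca hca cb hcb F hF hEq
end

section
/- Let (G, Λ) be a self-similar action of a groupoid G on a row-finite k-graph Λ with no sources and let C := Λ ⋈ G be the Zappa–Szép product. Then for all μ, ν ∈ Λ, μC ∩ νC = MCE(μ,ν)C, where MCE(μ,ν) = μΛ ∩ νΛ ∩ Λ^{d(μ)∨d(ν)}. -/
/-- for a self-similar action of a groupoid `G` on a row-finite
`k`-graph `Λ` with no sources, modelled as an ambient Zappa–Szép product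
category `X = Λ ⋈ G` with wide subcategories `Λset` and `Gset`, unique
factorisation, a degree map `d` on the `Λ`-part, and degree-preservation of the
induced left action, one has `μC ∩ νC = MCE(μ,ν)C` for all `μ, ν ∈ Λ`. -/
theorem zs_ideal_intersection_eq_MCE {k : ℕ} {X : Type*} (𝒳 : CatStruct X)
    (Λset Gset : Set X)
    (hΛunits : ∀ x : X, 𝒳.src x ∈ Λset ∧ 𝒳.rng x ∈ Λset)
    (hGunits : ∀ x : X, 𝒳.src x ∈ Gset ∧ 𝒳.rng x ∈ Gset)
    (hΛcomp : ∀ a ∈ Λset, ∀ b ∈ Λset, 𝒳.src a = 𝒳.rng b → 𝒳.comp a b ∈ Λset)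
    (hGcomp : ∀ a ∈ Gset, ∀ b ∈ Gset, 𝒳.src a = 𝒳.rng b → 𝒳.comp a b ∈ Gset)
    (hfact : ∀ x : X, ∃! p : X × X, p.1 ∈ Λset ∧ p.2 ∈ Gset ∧
      𝒳.src p.1 = 𝒳.rng p.2 ∧ x = 𝒳.comp p.1 p.2)
    (hG : ∀ g ∈ Gset, ∃ g' ∈ Gset, 𝒳.src g' = 𝒳.rng g ∧ 𝒳.rng g' = 𝒳.src g ∧
      𝒳.comp g g' = 𝒳.rng g ∧ 𝒳.comp g' g = 𝒳.src g)
    (d : X → Fin k → ℕ)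
    (hd_comp : ∀ a ∈ Λset, ∀ b ∈ Λset, 𝒳.src a = 𝒳.rng b →
      d (𝒳.comp a b) = d a + d b)
    (hfactorΛ : ∀ lam ∈ Λset, ∀ m n : Fin k → ℕ, d lam = m + n →
      ∃! p : X × X, p.1 ∈ Λset ∧ p.2 ∈ Λset ∧ 𝒳.src p.1 = 𝒳.rng p.2 ∧
        lam = 𝒳.comp p.1 p.2 ∧ d p.1 = m ∧ d p.2 = n)
    (hdeg : ∀ g ∈ Gset, ∀ lam ∈ Λset, 𝒳.src g = 𝒳.rng lam →
      ∀ lam' ∈ Λset, ∀ g' ∈ Gset, 𝒳.src lam' = 𝒳.rng g' →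
        𝒳.comp g lam = 𝒳.comp lam' g' → d lam' = d lam)
    (hrow : ∀ v : X, 𝒳.src v = v → ∀ n : Fin k → ℕ,
      {lam | lam ∈ Λset ∧ 𝒳.rng lam = v ∧ d lam = n}.Finite ∧
      {lam | lam ∈ Λset ∧ 𝒳.rng lam = v ∧ d lam = n}.Nonempty) :
    ∀ μ ∈ Λset, ∀ ν ∈ Λset,
      𝒳.ideal μ ∩ 𝒳.ideal ν =
        ⋃ lam ∈ {lam | lam ∈ Λset ∧ lam ∈ 𝒳.idealIn Λset μ ∧
          lam ∈ 𝒳.idealIn Λset ν ∧ d lam = fun i => max (d μ i) (d ν i)},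
          𝒳.ideal lam := by
  intro μ hμ ν hν
  ext x
  simp only [Set.mem_inter_iff, Set.mem_iUnion, Set.mem_setOf_eq, exists_prop]
  constructor
  · rintro ⟨⟨a, hsa, rfl⟩, ⟨b, hsb, hxb⟩⟩
    obtain ⟨⟨a₁, a₂⟩, ⟨ha₁, ha₂, hsa12, hafac⟩, -⟩ := hfact a
    obtain ⟨⟨b₁, b₂⟩, ⟨hb₁, hb₂, hsb12, hbfac⟩, -⟩ := hfact b
    have hμa₁ : 𝒳.src μ = 𝒳.rng a₁ := by
      rw [hsa, hafac, 𝒳.rng_comp a₁ a₂ hsa12]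
    have hνb₁ : 𝒳.src ν = 𝒳.rng b₁ := by
      rw [hsb, hbfac, 𝒳.rng_comp b₁ b₂ hsb12]
    set lam := 𝒳.comp μ a₁ with hlamdef
    have hlamΛ : lam ∈ Λset := hΛcomp μ hμ a₁ ha₁ hμa₁
    have hslam : 𝒳.src lam = 𝒳.rng a₂ := by
      rw [hlamdef, 𝒳.src_comp μ a₁ hμa₁, hsa12]
    have hxfac : 𝒳.comp μ a = 𝒳.comp lam a₂ := by
      rw [hafac, ← 𝒳.assoc μ a₁ a₂ hμa₁ hsa12]
    have hlam'Λ : 𝒳.comp ν b₁ ∈ Λset := hΛcomp ν hν b₁ hb₁ hνb₁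
    have hslam' : 𝒳.src (𝒳.comp ν b₁) = 𝒳.rng b₂ := by
      rw [𝒳.src_comp ν b₁ hνb₁, hsb12]
    have hxfac' : 𝒳.comp μ a = 𝒳.comp (𝒳.comp ν b₁) b₂ := by
      rw [hxb, hbfac, ← 𝒳.assoc ν b₁ b₂ hνb₁ hsb12]
    -- uniqueness of factorisation : comp μ a₁ = comp ν b₁
    obtain ⟨p, hp, hpu⟩ := hfact (𝒳.comp μ a)
    have h1 := hpu (lam, a₂) ⟨hlamΛ, ha₂, hslam, hxfac⟩
    have h2 := hpu (𝒳.comp ν b₁, b₂) ⟨hlam'Λ, hb₂, hslam', hxfac'⟩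
    have heq : lam = 𝒳.comp ν b₁ := by
      have := h1.trans h2.symm
      exact (Prod.mk.injEq _ _ _ _ ▸ this).1
    have hdlam : d lam = d μ + d a₁ := hd_comp μ hμ a₁ ha₁ hμa₁
    have hdlam' : d lam = d ν + d b₁ := by
      rw [heq]; exact hd_comp ν hν b₁ hb₁ hνb₁
    have hdμi : ∀ i, d lam i = d μ i + d a₁ i := fun i => by
      have := congrFun hdlam i; simpa using this
    have hdνi : ∀ i, d lam i = d ν i + d b₁ i := fun i => by
      have := congrFun hdlam' i; simpa using this
    set m : Fin k → ℕ := fun i => max (d μ i) (d ν i) with hmdef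
    have hmle : ∀ i, m i ≤ d lam i := fun i => by
      have h1 := hdμi i; have h2 := hdνi i
      simp only [hmdef]; omega
    have hsplit : d lam = m + fun i => d lam i - m i := by
      funext i; have := hmle i; simp only [Pi.add_apply]; omega
    obtain ⟨⟨lam1, lam2⟩, ⟨hl1, hl2, hs12, hlfac, hdl1, hdl2⟩, -⟩ :=
      hfactorΛ lam hlamΛ m _ hsplit
    have hdl1i : ∀ i, d lam1 i = m i := fun i => congrFun hdl1 i
    have hdl2i : ∀ i, d lam2 i = d lam i - m i := fun i => congrFun hdl2 i
    -- lam1 is an extension of μ and of ν within Λ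
    have key : ∀ ρ ∈ Λset, ∀ c₁, c₁ ∈ Λset → 𝒳.src ρ = 𝒳.rng c₁ →
        lam = 𝒳.comp ρ c₁ → (∀ i, d ρ i ≤ m i) →
        lam1 ∈ 𝒳.idealIn Λset ρ := by
      intro ρ hρ c₁ hc₁ hρc₁ hlameq hρle
      have hdlamρ : d lam = d ρ + d c₁ := by
        rw [hlameq]; exact hd_comp ρ hρ c₁ hc₁ hρc₁
      have hdρi : ∀ i, d lam i = d ρ i + d c₁ i := fun i => by
        have := congrFun hdlamρ i; simpa using this
      have hsplit1 : d lam1 = d ρ + fun i => m i - d ρ i := by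
        funext i; have := hρle i; have := hdl1i i; simp only [Pi.add_apply]; omega
      obtain ⟨⟨ρ1, ρ2⟩, ⟨hρ1, hρ2, hsρ12, hl1fac, hdρ1, hdρ2⟩, -⟩ :=
        hfactorΛ lam1 hl1 (d ρ) _ hsplit1
      have hsρ2l2 : 𝒳.src ρ2 = 𝒳.rng lam2 := by
        rw [← hs12, hl1fac, 𝒳.src_comp ρ1 ρ2 hsρ12]
      have hρ2l2Λ : 𝒳.comp ρ2 lam2 ∈ Λset := hΛcomp ρ2 hρ2 lam2 hl2 hsρ2l2
      have hsρ1 : 𝒳.src ρ1 = 𝒳.rng (𝒳.comp ρ2 lam2) := by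
        rw [𝒳.rng_comp ρ2 lam2 hsρ2l2, hsρ12]
      have hlamfac2 : lam = 𝒳.comp ρ1 (𝒳.comp ρ2 lam2) := by
        rw [hlfac, hl1fac, 𝒳.assoc ρ1 ρ2 lam2 hsρ12 hsρ2l2]
      have hdρ2l2 : d (𝒳.comp ρ2 lam2) = d c₁ := by
        rw [hd_comp ρ2 hρ2 lam2 hl2 hsρ2l2]
        funext i
        have h1 : d ρ2 i = m i - d ρ i := by have := congrFun hdρ2 i; simpa using this
        have h2 : d lam2 i = d lam i - m i := by have := congrFun hdl2 i; simpa using this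
        have h3 := hdρi i
        have h4 := hρle i
        have h5 := hmle i
        simp only [Pi.add_apply]; omega
      obtain ⟨q, hq, hqu⟩ := hfactorΛ lam hlamΛ (d ρ) (d c₁) hdlamρ
      have e1 := hqu (ρ, c₁) ⟨hρ, hc₁, hρc₁, hlameq, rfl, rfl⟩
      have e2 := hqu (ρ1, 𝒳.comp ρ2 lam2)
        ⟨hρ1, hρ2l2Λ, hsρ1, hlamfac2, hdρ1, hdρ2l2⟩
      have hρeq : ρ = ρ1 := by
        have := e1.trans e2.symm
        exact (Prod.mk.injEq _ _ _ _ ▸ this).1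
      exact ⟨ρ2, hρ2, by rw [hρeq]; exact hsρ12, by rw [hl1fac, hρeq]⟩
    have hμle : ∀ i, d μ i ≤ m i := fun i => le_max_left _ _
    have hνle : ∀ i, d ν i ≤ m i := fun i => le_max_right _ _
    have hmem1 : lam1 ∈ 𝒳.idealIn Λset μ := key μ hμ a₁ ha₁ hμa₁ rfl hμle
    have hmem2 : lam1 ∈ 𝒳.idealIn Λset ν := key ν hν b₁ hb₁ hνb₁ heq hνle
    refine ⟨lam1, ⟨hl1, hmem1, hmem2, hdl1⟩, ?_⟩
    -- x ∈ ideal lam1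
    have hsl2a2 : 𝒳.src lam2 = 𝒳.rng a₂ := by
      rw [← hslam, hlfac, 𝒳.src_comp lam1 lam2 hs12]
    refine ⟨𝒳.comp lam2 a₂, ?_, ?_⟩
    · rw [𝒳.rng_comp lam2 a₂ hsl2a2, hs12]
    · rw [hxfac, hlfac, 𝒳.assoc lam1 lam2 a₂ hs12 hsl2a2]
  · rintro ⟨lam, ⟨hlamΛ, ⟨c₁, hc₁, hsμc₁, hlam1⟩, ⟨c₂, hc₂, hsνc₂, hlam2⟩, -⟩,
      c, hsc, rfl⟩
    constructor
    · have hsc₁c : 𝒳.src c₁ = 𝒳.rng c := by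
        rw [← hsc, hlam1, 𝒳.src_comp μ c₁ hsμc₁]
      refine ⟨𝒳.comp c₁ c, ?_, ?_⟩
      · rw [𝒳.rng_comp c₁ c hsc₁c, hsμc₁]
      · rw [hlam1, 𝒳.assoc μ c₁ c hsμc₁ hsc₁c]
    · have hsc₂c : 𝒳.src c₂ = 𝒳.rng c := by
        rw [← hsc, hlam2, 𝒳.src_comp ν c₂ hsνc₂]
      refine ⟨𝒳.comp c₂ c, ?_, ?_⟩
      · rw [𝒳.rng_comp c₂ c hsc₂c, hsνc₂]
      · rw [hlam2, 𝒳.assoc ν c₂ c hsνc₂ hsc₂c]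
end

section
/- In the Zappa–Szép product X := ℕ ⋈ 𝔽_2^+ defined by the matched pair in which the free monoid 𝔽_2^+ = ⟨a,b⟩ acts trivially on ℕ (w ▷ n = n) and ℕ acts on 𝔽_2^+ by w ◁ n = a^{|w|} for n ≥ 1 and w ◁ 0 = w, for any n ∈ ℕ and w, u ∈ 𝔽_2^+ one has: nwX ∩ nuX = n(w∨u)X ∪ (n+1)a^{max(|w|,|u|)}X if w𝔽_2^+ ∩ u𝔽_2^+ ≠ ∅, and nwX ∩ nuX = (n+1)a^{max(|w|,|u|)}X otherwise. In particular, X is finitely aligned. -/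
/-- The Zappa–Szép product monoid `ℕ ⋈ 𝔽₂⁺`, where the free monoid on two
generators acts trivially on `ℕ` and `ℕ` acts on words by `w ◁ 0 = w`,
`w ◁ m = a^{|w|}` for `m ≥ 1`. Words are lists over `Fin 2`, with `a = [0]`,
`b = [1]`. -/
abbrev ZS : Type := ℕ × List (Fin 2)

def zmul (x y : ZS) : ZS :=
  (x.1 + y.1, (if y.1 = 0 then x.2 else List.replicate x.2.length (0 : Fin 2)) ++ y.2)

/-- Principal right ideal `xX` in `X = ℕ ⋈ 𝔽₂⁺`. -/
def zideal (x : ZS) : Set ZS := {y | ∃ z, y = zmul x z}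

/-- Principal right ideal `w𝔽₂⁺` in the free monoid. -/
def wideal (w : List (Fin 2)) : Set (List (Fin 2)) := {u | ∃ v, u = w ++ v}

lemma mem_wideal_iff {w x : List (Fin 2)} : x ∈ wideal w ↔ w <+: x := by
  constructor
  · rintro ⟨v, rfl⟩; exact List.prefix_append _ _
  · rintro ⟨v, rfl⟩; exact ⟨v, rfl⟩

lemma mem_zideal_iff {n : ℕ} {w : List (Fin 2)} {y : ZS} :
    y ∈ zideal (n, w) ↔
      (y.1 = n ∧ y.2 ∈ wideal w) ∨
      (n < y.1 ∧ y.2 ∈ wideal (List.replicate w.length (0 : Fin 2))) := by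
  constructor
  · rintro ⟨⟨m, v⟩, rfl⟩
    rcases Nat.eq_zero_or_pos m with rfl | hm
    · exact Or.inl ⟨rfl, ⟨v, by simp [zmul]⟩⟩
    · have hm' : m ≠ 0 := by omega
      refine Or.inr ⟨by simp [zmul]; omega, ⟨v, ?_⟩⟩
      simp [zmul, hm']
  · rintro (⟨h1, v, h2⟩ | ⟨h1, v, h2⟩)
    · exact ⟨(0, v), by simp [zmul, Prod.ext_iff, h1, h2]⟩
    · refine ⟨(y.1 - n, v), ?_⟩
      have : y.1 - n ≠ 0 := by omega
      simp [zmul, Prod.ext_iff, this, h2]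
      omega

lemma wideal_rep_inter {p q : ℕ} {x : List (Fin 2)} :
    x ∈ wideal (List.replicate p (0 : Fin 2)) ∧
      x ∈ wideal (List.replicate q (0 : Fin 2)) ↔
    x ∈ wideal (List.replicate (max p q) (0 : Fin 2)) := by
  simp only [mem_wideal_iff]
  constructor
  · rintro ⟨h1, h2⟩
    rcases max_cases p q with ⟨h, _⟩ | ⟨h, _⟩ <;> rw [h] <;> assumption
  · intro h
    constructor
    · refine List.IsPrefix.trans ?_ h
      rw [show max p q = p + (max p q - p) by omega, List.replicate_add]
      exact List.prefix_append _ _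
    · refine List.IsPrefix.trans ?_ h
      rw [show max p q = q + (max p q - q) by omega, List.replicate_add]
      exact List.prefix_append _ _

/-- Equal-index case of the intersection description. -/
lemma zideal_inter_eq (n : ℕ) (w u : List (Fin 2)) :
    ((wideal w ∩ wideal u).Nonempty →
      zideal (n, w) ∩ zideal (n, u) =
        zideal (n, if u.length ≤ w.length then w else u) ∪
          zideal (n + 1, List.replicate (max w.length u.length) (0 : Fin 2))) ∧
    (wideal w ∩ wideal u = ∅ →
      zideal (n, w) ∩ zideal (n, u) =
        zideal (n + 1, List.replicate (max w.length u.length) (0 : Fin 2))) := by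
  constructor
  · rintro ⟨x0, hx0w, hx0u⟩
    have hcomp : w <+: u ∨ u <+: w :=
      List.prefix_or_prefix_of_prefix (mem_wideal_iff.mp hx0w) (mem_wideal_iff.mp hx0u)
    set L := if u.length ≤ w.length then w else u with hL
    have hLlen : L.length = max w.length u.length := by
      rw [hL]; split <;> omega
    have hwid : wideal w ∩ wideal u = wideal L := by
      ext x
      simp only [Set.mem_inter_iff, mem_wideal_iff]
      constructor
      · rintro ⟨h1, h2⟩
        rw [hL]; split <;> assumption
      · intro h
        have hwL : w <+: L := by
          rw [hL]; split_ifs with hc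
          · exact List.prefix_refl _
          · rcases hcomp with h' | h'
            · exact h'
            · exact absurd h'.length_le (by omega)
        have huL : u <+: L := by
          rw [hL]; split_ifs with hc
          · rcases hcomp with h' | h'
            · exact List.prefix_of_prefix_length_le (List.prefix_refl _) h' (by omega)
            · exact h'
          · exact List.prefix_refl _
        exact ⟨hwL.trans h, huL.trans h⟩
    ext ⟨k, x⟩
    simp only [Set.mem_inter_iff, Set.mem_union, mem_zideal_iff]
    constructor
    · rintro ⟨h1 | h1, h2 | h2⟩
      · left; left
        refine ⟨h1.1, ?_⟩
        have : x ∈ wideal w ∩ wideal u := ⟨h1.2, h2.2⟩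
        rw [hwid] at this; exact this
      · omega
      · omega
      · have := wideal_rep_inter.mp ⟨h1.2, h2.2⟩
        left; right
        refine ⟨h1.1, ?_⟩
        rwa [hLlen]
    · rintro ((⟨h1, h2⟩ | ⟨h1, h2⟩) | (⟨h1, h2⟩ | ⟨h1, h2⟩))
      · rw [← hwid] at h2
        exact ⟨Or.inl ⟨h1, h2.1⟩, Or.inl ⟨h1, h2.2⟩⟩
      · rw [hLlen] at h2
        have := wideal_rep_inter.mpr h2
        exact ⟨Or.inr ⟨h1, this.1⟩, Or.inr ⟨h1, this.2⟩⟩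
      · have := wideal_rep_inter.mpr h2
        exact ⟨Or.inr ⟨by omega, this.1⟩, Or.inr ⟨by omega, this.2⟩⟩
      · simp only [List.length_replicate] at h2
        have := wideal_rep_inter.mpr h2
        exact ⟨Or.inr ⟨by omega, this.1⟩, Or.inr ⟨by omega, this.2⟩⟩
  · intro hemp
    ext ⟨k, x⟩
    simp only [Set.mem_inter_iff, mem_zideal_iff]
    constructor
    · rintro ⟨h1 | h1, h2 | h2⟩
      · exact absurd (Set.mem_inter h1.2 h2.2) (by rw [hemp]; exact id)
      · omega
      · omega
      · have := wideal_rep_inter.mp ⟨h1.2, h2.2⟩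
        rcases Nat.lt_or_ge k (n + 1) with h | h
        · omega
        rcases Nat.eq_or_lt_of_le h with h | h
        · left; exact ⟨h.symm, by simpa using this⟩
        · right; exact ⟨h, by simpa [List.length_replicate] using this⟩
    · rintro (⟨h1, h2⟩ | ⟨h1, h2⟩)
      · have := wideal_rep_inter.mpr (by simpa using h2)
        exact ⟨Or.inr ⟨by omega, this.1⟩, Or.inr ⟨by omega, this.2⟩⟩
      · rw [List.length_replicate] at h2
        have := wideal_rep_inter.mpr h2
        exact ⟨Or.inr ⟨by omega, this.1⟩, Or.inr ⟨by omega, this.2⟩⟩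

/-- Reduction for strictly smaller first index. -/
lemma zideal_inter_lt {n1 n2 : ℕ} (h : n1 < n2) (w u : List (Fin 2)) :
    zideal (n1, w) ∩ zideal (n2, u) =
      zideal (n2, List.replicate w.length (0 : Fin 2)) ∩ zideal (n2, u) := by
  ext ⟨k, x⟩
  simp only [Set.mem_inter_iff, mem_zideal_iff, List.length_replicate]
  constructor
  · rintro ⟨h1 | h1, h2⟩ <;> [omega; skip]
    have hk : n2 ≤ k := by rcases h2 with h2 | h2 <;> omega
    rcases Nat.eq_or_lt_of_le hk with hk | hk
    · exact ⟨Or.inl ⟨hk.symm, h1.2⟩, h2⟩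
    · exact ⟨Or.inr ⟨hk, h1.2⟩, h2⟩
  · rintro ⟨h1 | h1, h2⟩
    · exact ⟨Or.inr ⟨by omega, h1.2⟩, h2⟩
    · exact ⟨Or.inr ⟨by omega, h1.2⟩, h2⟩

lemma zideal_finitely_aligned_eq (n : ℕ) (w u : List (Fin 2)) :
    ∃ F : Finset ZS, zideal (n, w) ∩ zideal (n, u) = ⋃ c ∈ F, zideal c := by
  rcases Set.eq_empty_or_nonempty (wideal w ∩ wideal u) with he | hne
  · exact ⟨{(n + 1, List.replicate (max w.length u.length) (0 : Fin 2))}, by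
      rw [(zideal_inter_eq n w u).2 he]; simp⟩
  · exact ⟨{(n, if u.length ≤ w.length then w else u),
      (n + 1, List.replicate (max w.length u.length) (0 : Fin 2))}, by
      rw [(zideal_inter_eq n w u).1 hne]; simp [Set.union_comm]⟩

theorem zs_ideal_description_and_finitely_aligned :
    (∀ (n : ℕ) (w u : List (Fin 2)),
      ((wideal w ∩ wideal u).Nonempty →
        zideal (n, w) ∩ zideal (n, u) =
          zideal (n, if u.length ≤ w.length then w else u) ∪
            zideal (n + 1, List.replicate (max w.length u.length) (0 : Fin 2))) ∧
      (wideal w ∩ wideal u = ∅ →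
        zideal (n, w) ∩ zideal (n, u) =
          zideal (n + 1, List.replicate (max w.length u.length) (0 : Fin 2)))) ∧
    (∀ x y : ZS, ∃ F : Finset ZS, zideal x ∩ zideal y = ⋃ c ∈ F, zideal c) := by
  refine ⟨zideal_inter_eq, ?_⟩
  rintro ⟨n1, w⟩ ⟨n2, u⟩
  rcases Nat.lt_trichotomy n1 n2 with h | rfl | h
  · rw [zideal_inter_lt h w u]
    exact zideal_finitely_aligned_eq n2 _ u
  · exact zideal_finitely_aligned_eq n1 w u
  · rw [Set.inter_comm, zideal_inter_lt h u w]
    exact zideal_finitely_aligned_eq n1 _ w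
end

section
/- In the monoid X := ℕ ⋈ 𝔽_2^+ (with 𝔽_2^+ acting trivially on ℕ and ℕ acting on 𝔽_2^+ by w ◁ n = a^{|w|} for n ≥ 1), the ideals aX and bX have nonempty intersection (both contain (1)(a) = a·1 = b·1), even though a𝔽_2^+ ∩ b𝔽_2^+ = ∅ in 𝔽_2^+. Consequently, the inclusion 𝔽_2^+ ↪ X is not concordant. -/
def zidealIn (D : Set ZS) (x : ZS) : Set ZS := {y | ∃ z ∈ D, y = zmul x z}

/-- The embedded copy of `𝔽₂⁺` inside `ℕ ⋈ 𝔽₂⁺`. -/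
def Cemb : Set ZS := {x | x.1 = 0}

theorem f2_not_concordant_in_zs :
    (zideal (0, [(0 : Fin 2)]) ∩ zideal (0, [(1 : Fin 2)])).Nonempty ∧
    wideal [(0 : Fin 2)] ∩ wideal [(1 : Fin 2)] = ∅ ∧
    ¬ (∀ c₁ ∈ Cemb, ∀ c₂ ∈ Cemb, (zideal c₁ ∩ zideal c₂).Nonempty →
        ∃ F : Finset ZS, ↑F ⊆ Cemb ∧
          (∀ f ∈ F, ∀ f' ∈ F, f ≠ f' → f ∉ zidealIn Cemb f') ∧
          (zidealIn Cemb c₁ ∩ zidealIn Cemb c₂ = ⋃ f ∈ F, zidealIn Cemb f) ∧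
          (∀ x₁ x₂ : ZS, zmul c₁ x₁ = zmul c₂ x₂ →
            ∃ f ∈ F, ∃ a₁ a₂ y : ZS, f = zmul c₁ a₁ ∧ f = zmul c₂ a₂ ∧
              x₁ = zmul a₁ y ∧ x₂ = zmul a₂ y)) := by
  refine ⟨⟨(1, [(0 : Fin 2)]), ⟨(1, []), by simp [zmul]⟩, ⟨(1, []), by simp [zmul]⟩⟩, ?_, ?_⟩
  · ext u
    simp only [Set.mem_inter_iff, Set.mem_empty_iff_false, iff_false, wideal,
      Set.mem_setOf_eq, not_and]
    rintro ⟨v, rfl⟩ ⟨v', h⟩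
    simp at h
  · intro H
    obtain ⟨F, hFC, -, -, hfac⟩ :=
      H (0, [(0 : Fin 2)]) rfl (0, [(1 : Fin 2)]) rfl
        ⟨(1, [(0 : Fin 2)]), ⟨(1, []), by simp [zmul]⟩, ⟨(1, []), by simp [zmul]⟩⟩
    obtain ⟨f, hfF, a₁, a₂, y, hf1, hf2, -, -⟩ :=
      hfac (1, []) (1, []) (by simp [zmul])
    have hf : f.1 = 0 := hFC hfF
    have h1 : a₁.1 = 0 := by
      have := congrArg Prod.fst hf1
      simp [zmul, hf] at this
      omega
    have h2 : a₂.1 = 0 := by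
      have := congrArg Prod.fst hf2
      simp [zmul, hf] at this
      omega
    simp [zmul, h2] at hf2
    rw [hf2] at hf1
    simp [zmul, h1] at hf1
end

section
/- Fix k ≥ 0. Let G be a discrete groupoid acting self-similarly on a finitely aligned (k+1)-graph Λ. Let Γ = Λ^{ℕ^k × {0}} (the sub-k-graph of paths of degree in the first k coordinates). Then the inclusion Γ ⋈ G ↪ Λ ⋈ G is concordant: for every c_1, c_2 ∈ Γ ⋈ G with c_1(Λ⋈G) ∩ c_2(Λ⋈G) ≠ ∅, there is a finite independent set F ⊆ Γ ⋈ G generating c_1(Γ⋈G) ∩ c_2(Γ⋈G) such that every common extension c_1x_1 = c_2x_2 in Λ ⋈ G factors through an element of F. -/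
private lemma exists_antichain' {α : Type*} (le : α → α → Prop)
    (htrans : ∀ a b c, le a b → le b c → le a c)
    (hrefl : ∀ s, le s s) :
    ∀ S : Finset α, ∃ F : Finset α, F ⊆ S ∧
      (∀ f ∈ F, ∀ f' ∈ F, f ≠ f' → ¬ le f f') ∧ (∀ s ∈ S, ∃ f ∈ F, le s f) := by
  classical
  intro S
  induction S using Finset.strongInduction with
  | _ S ih =>
    by_cases h : ∃ s ∈ S, ∃ s' ∈ S, s ≠ s' ∧ le s s'
    · obtain ⟨s, hs, s', hs', hne, hle⟩ := h
      obtain ⟨F, hFsub, hanti, hcover⟩ := ih (S.erase s) (Finset.erase_ssubset hs)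
      refine ⟨F, hFsub.trans (Finset.erase_subset _ _), hanti, ?_⟩
      intro u hu
      by_cases hus : u = s
      · subst hus
        obtain ⟨f, hf, hlef⟩ := hcover s' (Finset.mem_erase.2 ⟨fun h' => hne h'.symm, hs'⟩)
        exact ⟨f, hf, htrans _ _ _ hle hlef⟩
      · exact hcover u (Finset.mem_erase.2 ⟨hus, hu⟩)
    · exact ⟨S, Finset.Subset.refl S, fun f hf f' hf' hne hle => h ⟨f, hf, f', hf', hne, hle⟩,
        fun s hs => ⟨s, hs, hrefl s⟩⟩

/-- for a self-similar action of a discrete groupoid `G` on a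
finitely aligned `(k+1)`-graph `Λ`, the inclusion `Γ ⋈ G ↪ Λ ⋈ G` is
concordant, where `Γ = Λ^{ℕ^k × {0}}`. The Zappa–Szép product is modelled as
an ambient category `X` with wide subcategories `Λset`, `Gset` and unique
factorisation. -/
theorem sub_zs_concordant {k : ℕ} {X : Type*} (𝒳 : CatStruct X)
    (Λset Gset : Set X)
    (hΛunits : ∀ x : X, 𝒳.src x ∈ Λset ∧ 𝒳.rng x ∈ Λset)
    (hGunits : ∀ x : X, 𝒳.src x ∈ Gset ∧ 𝒳.rng x ∈ Gset)
    (hΛcomp : ∀ a ∈ Λset, ∀ b ∈ Λset, 𝒳.src a = 𝒳.rng b → 𝒳.comp a b ∈ Λset)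
    (hGcomp : ∀ a ∈ Gset, ∀ b ∈ Gset, 𝒳.src a = 𝒳.rng b → 𝒳.comp a b ∈ Gset)
    (hfact : ∀ x : X, ∃! p : X × X, p.1 ∈ Λset ∧ p.2 ∈ Gset ∧
      𝒳.src p.1 = 𝒳.rng p.2 ∧ x = 𝒳.comp p.1 p.2)
    (hG : ∀ g ∈ Gset, ∃ g' ∈ Gset, 𝒳.src g' = 𝒳.rng g ∧ 𝒳.rng g' = 𝒳.src g ∧
      𝒳.comp g g' = 𝒳.rng g ∧ 𝒳.comp g' g = 𝒳.src g)
    (d : X → Fin (k + 1) → ℕ)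
    (hd_comp : ∀ a ∈ Λset, ∀ b ∈ Λset, 𝒳.src a = 𝒳.rng b →
      d (𝒳.comp a b) = d a + d b)
    (hfactorΛ : ∀ lam ∈ Λset, ∀ m n : Fin (k + 1) → ℕ, d lam = m + n →
      ∃! p : X × X, p.1 ∈ Λset ∧ p.2 ∈ Λset ∧ 𝒳.src p.1 = 𝒳.rng p.2 ∧
        lam = 𝒳.comp p.1 p.2 ∧ d p.1 = m ∧ d p.2 = n)
    (hdeg : ∀ g ∈ Gset, ∀ lam ∈ Λset, 𝒳.src g = 𝒳.rng lam →
      ∀ lam' ∈ Λset, ∀ g' ∈ Gset, 𝒳.src lam' = 𝒳.rng g' →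
        𝒳.comp g lam = 𝒳.comp lam' g' → d lam' = d lam)
    (hFA : ∀ a ∈ Λset, ∀ b ∈ Λset, ∃ F : Finset X, ↑F ⊆ Λset ∧
      𝒳.idealIn Λset a ∩ 𝒳.idealIn Λset b = ⋃ c ∈ F, 𝒳.idealIn Λset c) :
    ∀ Γset D : Set X,
      Γset = {lam | lam ∈ Λset ∧ d lam (Fin.last k) = 0} →
      D = {x | ∃ γ ∈ Γset, ∃ g ∈ Gset, 𝒳.src γ = 𝒳.rng g ∧ x = 𝒳.comp γ g} →
      ∀ c₁ ∈ D, ∀ c₂ ∈ D, (𝒳.ideal c₁ ∩ 𝒳.ideal c₂).Nonempty →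
        ∃ F : Finset X, ↑F ⊆ D ∧
          (∀ f ∈ F, ∀ f' ∈ F, f ≠ f' → f ∉ 𝒳.idealIn D f') ∧
          (𝒳.idealIn D c₁ ∩ 𝒳.idealIn D c₂ = ⋃ f ∈ F, 𝒳.idealIn D f) ∧
          (∀ x₁ x₂ : X, 𝒳.src c₁ = 𝒳.rng x₁ → 𝒳.src c₂ = 𝒳.rng x₂ →
            𝒳.comp c₁ x₁ = 𝒳.comp c₂ x₂ →
            ∃ f ∈ F, ∃ a₁ a₂ y : X, 𝒳.src c₁ = 𝒳.rng a₁ ∧ 𝒳.src c₂ = 𝒳.rng a₂ ∧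
              f = 𝒳.comp c₁ a₁ ∧ f = 𝒳.comp c₂ a₂ ∧
              𝒳.src a₁ = 𝒳.rng y ∧ 𝒳.src a₂ = 𝒳.rng y ∧
              x₁ = 𝒳.comp a₁ y ∧ x₂ = 𝒳.comp a₂ y) := by
  intro Γset D hΓ hD c₁ hc₁ c₂ hc₂ _hne
  classical
  subst hΓ
  -- basic degree facts
  have dsrc0 : ∀ a : X, d (𝒳.src a) = 0 := by
    intro a
    have h := hd_comp (𝒳.src a) (hΛunits a).1 (𝒳.src (𝒳.src a)) (hΛunits (𝒳.src a)).1
      (by rw [𝒳.src_src, 𝒳.rng_src])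
    rw [𝒳.comp_src, 𝒳.src_src] at h
    funext j
    have h2 := congrFun h j
    simp only [Pi.add_apply, Pi.zero_apply] at h2 ⊢
    omega
  have drng0 : ∀ a : X, d (𝒳.rng a) = 0 := fun a => by
    rw [← 𝒳.src_rng a]; exact dsrc0 (𝒳.rng a)
  have degzero : ∀ lam ∈ Λset, d lam = 0 → lam = 𝒳.rng lam := by
    intro lam hlam h0
    obtain ⟨p, hp, hup⟩ := hfactorΛ lam hlam 0 0 (by rw [h0]; simp)
    have h1 := hup (𝒳.rng lam, lam)
      ⟨(hΛunits lam).2, hlam, 𝒳.src_rng lam, (𝒳.rng_comp_self lam).symm, drng0 lam, h0⟩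
    have h2 := hup (lam, 𝒳.src lam)
      ⟨hlam, (hΛunits lam).1, (𝒳.rng_src lam).symm, (𝒳.comp_src lam).symm, h0, dsrc0 lam⟩
    exact (show 𝒳.rng lam = lam from congrArg Prod.fst (h1.trans h2.symm)).symm
  have lamc : ∀ a ∈ Λset, ∀ b ∈ Λset, ∀ c ∈ Λset, 𝒳.src a = 𝒳.rng b → 𝒳.src a = 𝒳.rng c →
      𝒳.comp a b = 𝒳.comp a c → b = c := by
    intro a ha b hb c hc hab hac h
    have hdbc : d b = d c := by
      have h1 := hd_comp a ha b hb hab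
      have h2 := hd_comp a ha c hc hac
      rw [h] at h1
      exact add_left_cancel (h1.symm.trans h2)
    obtain ⟨p, hp, hup⟩ := hfactorΛ (𝒳.comp a b) (hΛcomp a ha b hb hab) (d a) (d b)
      (hd_comp a ha b hb hab)
    have h1 := hup (a, b) ⟨ha, hb, hab, rfl, rfl, rfl⟩
    have h2 := hup (a, c) ⟨ha, hc, hac, h, rfl, hdbc.symm⟩
    exact congrArg Prod.snd (h1.trans h2.symm)
  have swap : ∀ g ∈ Gset, ∀ lam ∈ Λset, 𝒳.src g = 𝒳.rng lam →
      ∃ lam' g', lam' ∈ Λset ∧ g' ∈ Gset ∧ 𝒳.src lam' = 𝒳.rng g' ∧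
        𝒳.comp g lam = 𝒳.comp lam' g' ∧ d lam' = d lam ∧
        𝒳.rng lam' = 𝒳.rng g ∧ 𝒳.src g' = 𝒳.src lam := by
    intro g hg lam hlam hsl
    obtain ⟨⟨lam', g'⟩, ⟨h1, h2, h3, h4⟩, _⟩ := hfact (𝒳.comp g lam)
    refine ⟨lam', g', h1, h2, h3, h4, hdeg g hg lam hlam hsl lam' h1 g' h2 h3 h4, ?_, ?_⟩
    · rw [← 𝒳.rng_comp lam' g' h3, ← h4, 𝒳.rng_comp g lam hsl]
    · rw [← 𝒳.src_comp lam' g' h3, ← h4, 𝒳.src_comp g lam hsl]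
  have Xc : ∀ c a b : X, 𝒳.src c = 𝒳.rng a → 𝒳.src c = 𝒳.rng b →
      𝒳.comp c a = 𝒳.comp c b → a = b := by
    intro c a b hca hcb h
    obtain ⟨⟨lc, gc⟩, ⟨hlΛ, hgG, hslg, hceq⟩, _⟩ := hfact c
    have hsc : 𝒳.src c = 𝒳.src gc := by rw [hceq, 𝒳.src_comp _ _ hslg]
    obtain ⟨gc', hgc'G, hs', hr', hgg', hg'g⟩ := hG gc hgG
    have step : ∀ u, 𝒳.src c = 𝒳.rng u →
        ∃ μ hu, μ ∈ Λset ∧ hu ∈ Gset ∧ 𝒳.src μ = 𝒳.rng hu ∧ 𝒳.src lc = 𝒳.rng μ ∧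
          𝒳.comp gc u = 𝒳.comp μ hu ∧ 𝒳.comp c u = 𝒳.comp (𝒳.comp lc μ) hu := by
      intro u hu
      have hgu : 𝒳.src gc = 𝒳.rng u := by rw [← hsc]; exact hu
      obtain ⟨⟨μ, h'⟩, ⟨hμ, hh', hs₀, he₀⟩, _⟩ := hfact (𝒳.comp gc u)
      have hrμ : 𝒳.src lc = 𝒳.rng μ := by
        rw [← 𝒳.rng_comp μ h' hs₀, ← he₀, 𝒳.rng_comp gc u hgu]; exact hslg
      refine ⟨μ, h', hμ, hh', hs₀, hrμ, he₀, ?_⟩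
      rw [hceq, 𝒳.assoc lc gc u hslg hgu, he₀, ← 𝒳.assoc lc μ h' hrμ hs₀]
    obtain ⟨μa, ha', hμa, hha, hsa, hra, hea, hca'⟩ := step a hca
    obtain ⟨μb, hb', hμb, hhb, hsb, hrb, heb, hcb'⟩ := step b hcb
    obtain ⟨q, hq, huq⟩ := hfact (𝒳.comp c a)
    have h1 := huq (𝒳.comp lc μa, ha') ⟨hΛcomp lc hlΛ μa hμa hra, hha,
      by rw [𝒳.src_comp lc μa hra]; exact hsa, hca'⟩
    have h2 := huq (𝒳.comp lc μb, hb') ⟨hΛcomp lc hlΛ μb hμb hrb, hhb,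
      by rw [𝒳.src_comp lc μb hrb]; exact hsb, by rw [h]; exact hcb'⟩
    have hpq := h1.trans h2.symm
    have hμeq : μa = μb := lamc lc hlΛ μa hμa μb hμb hra hrb (congrArg Prod.fst hpq)
    have hgab : 𝒳.comp gc a = 𝒳.comp gc b := by
      rw [hea, heb, hμeq, show ha' = hb' from congrArg Prod.snd hpq]
    have hga : 𝒳.src gc = 𝒳.rng a := by rw [← hsc]; exact hca
    have hgb : 𝒳.src gc = 𝒳.rng b := by rw [← hsc]; exact hcb
    calc a = 𝒳.comp (𝒳.rng a) a := (𝒳.rng_comp_self a).symm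
      _ = 𝒳.comp (𝒳.comp gc' gc) a := by rw [hg'g, hga]
      _ = 𝒳.comp gc' (𝒳.comp gc a) := 𝒳.assoc gc' gc a hs' hga
      _ = 𝒳.comp gc' (𝒳.comp gc b) := by rw [hgab]
      _ = 𝒳.comp (𝒳.comp gc' gc) b := (𝒳.assoc gc' gc b hs' hgb).symm
      _ = 𝒳.comp (𝒳.rng b) b := by rw [hg'g, hgb]
      _ = b := 𝒳.rng_comp_self b
  -- D interface
  have memD : ∀ γ g, γ ∈ Λset → d γ (Fin.last k) = 0 → g ∈ Gset → 𝒳.src γ = 𝒳.rng g →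
      𝒳.comp γ g ∈ D := by
    intro γ g h1 h2 h3 h4
    rw [hD]
    exact ⟨γ, ⟨h1, h2⟩, g, h3, h4, rfl⟩
  have memD' : ∀ x ∈ D, ∃ γ g, γ ∈ Λset ∧ d γ (Fin.last k) = 0 ∧ g ∈ Gset ∧
      𝒳.src γ = 𝒳.rng g ∧ x = 𝒳.comp γ g := by
    intro x hx
    rw [hD] at hx
    obtain ⟨γ, ⟨h1, h2⟩, g, h3, h4, h5⟩ := hx
    exact ⟨γ, g, h1, h2, h3, h4, h5⟩
  have hDunit : ∀ a : X, 𝒳.src a ∈ D := by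
    intro a
    have h := memD (𝒳.src a) (𝒳.src a) (hΛunits a).1 (by rw [dsrc0]; rfl) (hGunits a).1
      (by rw [𝒳.src_src, 𝒳.rng_src])
    have h2 := 𝒳.comp_src (𝒳.src a)
    rw [𝒳.src_src] at h2
    rwa [h2] at h
  have hΓD : ∀ γ, γ ∈ Λset → d γ (Fin.last k) = 0 → γ ∈ D := by
    intro γ h1 h2
    have h := memD γ (𝒳.src γ) h1 h2 (hGunits γ).1 (𝒳.rng_src γ).symm
    rwa [𝒳.comp_src γ] at h
  have hDcomp : ∀ u ∈ D, ∀ v ∈ D, 𝒳.src u = 𝒳.rng v → 𝒳.comp u v ∈ D := by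
    intro u hu v hv hs
    obtain ⟨γ, g, hγΛ, hγ0, hgG, hsγ, hue⟩ := memD' u hu
    obtain ⟨δ, h', hδΛ, hδ0, hhG, hsδ, hve⟩ := memD' v hv
    have hsu : 𝒳.src u = 𝒳.src g := by rw [hue, 𝒳.src_comp γ g hsγ]
    have hrv : 𝒳.rng v = 𝒳.rng δ := by rw [hve, 𝒳.rng_comp δ h' hsδ]
    have hgδ : 𝒳.src g = 𝒳.rng δ := by rw [← hsu, hs, hrv]
    obtain ⟨δ', g'', hδ'Λ, hg''G, hsδ', heqsw, hdδ', hrδ', hsg''⟩ := swap g hgG δ hδΛ hgδ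
    have hγδ' : 𝒳.src γ = 𝒳.rng δ' := by rw [hsγ, ← hrδ']
    have hg''h : 𝒳.src g'' = 𝒳.rng h' := by rw [hsg'']; exact hsδ
    have hcomp : 𝒳.comp u v = 𝒳.comp (𝒳.comp γ δ') (𝒳.comp g'' h') := by
      rw [hue, hve, 𝒳.assoc γ g (𝒳.comp δ h') hsγ (by rw [𝒳.rng_comp δ h' hsδ]; exact hgδ),
        ← 𝒳.assoc g δ h' hgδ hsδ, heqsw, 𝒳.assoc δ' g'' h' hsδ' hg''h,
        ← 𝒳.assoc γ δ' (𝒳.comp g'' h') hγδ' (by rw [𝒳.rng_comp g'' h' hg''h]; exact hsδ')]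
    rw [hcomp]
    exact memD (𝒳.comp γ δ') (𝒳.comp g'' h') (hΛcomp γ hγΛ δ' hδ'Λ hγδ')
      (by rw [hd_comp γ hγΛ δ' hδ'Λ hγδ']; simp [hdδ', hγ0, hδ0])
      (hGcomp g'' hg''G h' hhG hg''h)
      (by rw [𝒳.src_comp γ δ' hγδ', 𝒳.rng_comp g'' h' hg''h]; exact hsδ')
  have selfIn : ∀ a : X, a ∈ 𝒳.idealIn D a := fun a =>
    ⟨𝒳.src a, hDunit a, (𝒳.rng_src a).symm, (𝒳.comp_src a).symm⟩
  have itrans : ∀ a b : X, a ∈ 𝒳.idealIn D b → 𝒳.idealIn D a ⊆ 𝒳.idealIn D b := by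
    rintro a b ⟨u, huD, hbu, hab⟩ x ⟨v, hvD, hav, hxv⟩
    have hsu : 𝒳.src u = 𝒳.rng v := by
      have h1 : 𝒳.src a = 𝒳.src u := by rw [hab, 𝒳.src_comp b u hbu]
      rw [← h1]; exact hav
    exact ⟨𝒳.comp u v, hDcomp u huD v hvD hsu,
      by rw [𝒳.rng_comp u v hsu]; exact hbu,
      by rw [hxv, hab, 𝒳.assoc b u v hbu hsu]⟩
  -- factorisation of cᵢ · u with Λ-part divisible by γᵢ
  have fside : ∀ γ g c, γ ∈ Λset → g ∈ Gset → 𝒳.src γ = 𝒳.rng g → c = 𝒳.comp γ g →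
      ∀ u, 𝒳.src c = 𝒳.rng u →
      ∃ ν h a, ν ∈ Λset ∧ h ∈ Gset ∧ 𝒳.src ν = 𝒳.rng h ∧ 𝒳.comp c u = 𝒳.comp ν h ∧
        a ∈ Λset ∧ 𝒳.src γ = 𝒳.rng a ∧ ν = 𝒳.comp γ a ∧ (u ∈ D → d a (Fin.last k) = 0) := by
    intro γ g c hγΛ hgG hsγ hce u hu
    obtain ⟨⟨lu, hu'⟩, ⟨hlΛ, hhG, hsl, hueq⟩, huniq⟩ := hfact u
    have hsc : 𝒳.src c = 𝒳.src g := by rw [hce, 𝒳.src_comp γ g hsγ]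
    have hrl : 𝒳.rng u = 𝒳.rng lu := by rw [hueq, 𝒳.rng_comp lu hu' hsl]
    have hgl : 𝒳.src g = 𝒳.rng lu := by rw [← hsc, hu, hrl]
    obtain ⟨l', g'', hl'Λ, hg''G, hsl', heqsw, hdl', hrl', hsg''⟩ := swap g hgG lu hlΛ hgl
    have hγl' : 𝒳.src γ = 𝒳.rng l' := by rw [hsγ, ← hrl']
    have hg''h : 𝒳.src g'' = 𝒳.rng hu' := by rw [hsg'']; exact hsl
    have hmain : 𝒳.comp c u = 𝒳.comp (𝒳.comp γ l') (𝒳.comp g'' hu') := by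
      rw [hce, hueq, 𝒳.assoc γ g (𝒳.comp lu hu') hsγ (by rw [𝒳.rng_comp lu hu' hsl]; exact hgl),
        ← 𝒳.assoc g lu hu' hgl hsl, heqsw, 𝒳.assoc l' g'' hu' hsl' hg''h,
        ← 𝒳.assoc γ l' (𝒳.comp g'' hu') hγl' (by rw [𝒳.rng_comp g'' hu' hg''h]; exact hsl')]
    refine ⟨𝒳.comp γ l', 𝒳.comp g'' hu', l', hΛcomp γ hγΛ l' hl'Λ hγl',
      hGcomp g'' hg''G hu' hhG hg''h,
      by rw [𝒳.src_comp γ l' hγl', 𝒳.rng_comp g'' hu' hg''h]; exact hsl',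
      hmain, hl'Λ, hγl', rfl, ?_⟩
    intro huD
    obtain ⟨ν₀, g₀, hν₀Λ, hν₀0, hg₀G, hsν₀, hueq₀⟩ := memD' u huD
    have hp := huniq (ν₀, g₀) ⟨hν₀Λ, hg₀G, hsν₀, hueq₀⟩
    have h1 : ν₀ = lu := congrArg Prod.fst hp
    rw [hdl', ← h1]
    exact hν₀0
  -- pulling a Γ-multiple of γ back to a D-multiple of c
  have key2 : ∀ γ g c, γ ∈ Λset → g ∈ Gset → 𝒳.src γ = 𝒳.rng g → c = 𝒳.comp γ g →
      ∀ a, a ∈ Λset → d a (Fin.last k) = 0 → 𝒳.src γ = 𝒳.rng a →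
      ∃ A, A ∈ D ∧ 𝒳.src c = 𝒳.rng A ∧ 𝒳.comp γ a = 𝒳.comp c A ∧ 𝒳.src A = 𝒳.src a := by
    intro γ g c hγΛ hgG hsγg hce a haΛ ha0 hsγa
    obtain ⟨g', hg'G, hsg', hrg', hgg', hg'g⟩ := hG g hgG
    have hg'a : 𝒳.src g' = 𝒳.rng a := by rw [hsg', ← hsγg]; exact hsγa
    obtain ⟨a', g'', ha'Λ, hg''G, hsa', heqsw, hda', hra', hsg''⟩ := swap g' hg'G a haΛ hg'a
    have hAD : 𝒳.comp g' a ∈ D := by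
      rw [heqsw]
      exact memD a' g'' ha'Λ (by rw [hda']; exact ha0) hg''G hsa'
    have hsc : 𝒳.src c = 𝒳.src g := by rw [hce, 𝒳.src_comp γ g hsγg]
    have hscA : 𝒳.src c = 𝒳.rng (𝒳.comp g' a) := by
      rw [𝒳.rng_comp g' a hg'a, hrg', hsc]
    have hcomp : 𝒳.comp c (𝒳.comp g' a) = 𝒳.comp γ a := by
      rw [hce, 𝒳.assoc γ g (𝒳.comp g' a) hsγg (by rw [𝒳.rng_comp g' a hg'a]; exact hrg'.symm),
        ← 𝒳.assoc g g' a hrg'.symm hg'a, hgg', ← hsγg, hsγa, 𝒳.rng_comp_self a]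
    exact ⟨𝒳.comp g' a, hAD, hscA, hcomp.symm, 𝒳.src_comp g' a hg'a⟩
  -- factor c₁ and c₂
  obtain ⟨γ₁, g₁, hγ₁Λ, hγ₁0, hg₁G, hsγ₁, hc₁e⟩ := memD' c₁ hc₁
  obtain ⟨γ₂, g₂, hγ₂Λ, hγ₂0, hg₂G, hsγ₂, hc₂e⟩ := memD' c₂ hc₂
  obtain ⟨E, hEΛ, hEeq⟩ := hFA γ₁ hγ₁Λ γ₂ hγ₂Λ
  -- trimming of elements of E
  have hmemE : ∀ e ∈ E, ∃ te : X, te ∈ Λset ∧ d te (Fin.last k) = 0 ∧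
      (∃ e₁, e₁ ∈ Λset ∧ 𝒳.src te = 𝒳.rng e₁ ∧ e = 𝒳.comp te e₁ ∧
        ∀ j, j ≠ Fin.last k → d e₁ j = 0) ∧
      (∃ a, a ∈ Λset ∧ d a (Fin.last k) = 0 ∧ 𝒳.src γ₁ = 𝒳.rng a ∧ te = 𝒳.comp γ₁ a) ∧
      (∃ a, a ∈ Λset ∧ d a (Fin.last k) = 0 ∧ 𝒳.src γ₂ = 𝒳.rng a ∧ te = 𝒳.comp γ₂ a) := by
    intro e he
    have heΛ : e ∈ Λset := hEΛ he
    have heI : e ∈ 𝒳.idealIn Λset γ₁ ∩ 𝒳.idealIn Λset γ₂ := by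
      rw [hEeq]
      exact Set.mem_iUnion₂.2 ⟨e, he, 𝒳.src e, (hΛunits e).1, (𝒳.rng_src e).symm,
        (𝒳.comp_src e).symm⟩
    obtain ⟨⟨μ₁, hμ₁Λ, hsγμ₁, heq₁⟩, ⟨μ₂, hμ₂Λ, hsγμ₂, heq₂⟩⟩ := heI
    have hdsum : d e = (fun j => if j = Fin.last k then 0 else d e j) +
        (fun j => if j = Fin.last k then d e (Fin.last k) else 0) := by
      funext j
      by_cases hj : j = Fin.last k <;> simp [hj]
    obtain ⟨⟨te, e₁⟩, hte, huq⟩ := hfactorΛ e heΛ _ _ hdsum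
    obtain ⟨hteΛ, he₁Λ, hste, heqte, hdte, hde₁⟩ := hte
    replace hteΛ : te ∈ Λset := hteΛ
    replace he₁Λ : e₁ ∈ Λset := he₁Λ
    replace hste : 𝒳.src te = 𝒳.rng e₁ := hste
    replace heqte : e = 𝒳.comp te e₁ := heqte
    replace hdte : d te = (fun j => if j = Fin.last k then 0 else d e j) := hdte
    replace hde₁ : d e₁ = (fun j => if j = Fin.last k then d e (Fin.last k) else 0) := hde₁
    have hγside : ∀ γ μ, γ ∈ Λset → d γ (Fin.last k) = 0 → μ ∈ Λset → 𝒳.src γ = 𝒳.rng μ →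
        e = 𝒳.comp γ μ →
        ∃ a, a ∈ Λset ∧ d a (Fin.last k) = 0 ∧ 𝒳.src γ = 𝒳.rng a ∧ te = 𝒳.comp γ a := by
      intro γ μ hγΛ hγ0 hμΛ hsγμ heq
      have hde' : d e = d γ + d μ := by rw [heq]; exact hd_comp γ hγΛ μ hμΛ hsγμ
      have hdμ : d μ = (fun j => if j = Fin.last k then 0 else d μ j) +
          (fun j => if j = Fin.last k then d e (Fin.last k) else 0) := by
        funext j
        have hj' := congrFun hde' j
        simp only [Pi.add_apply] at hj'
        by_cases hj : j = Fin.last k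
        · subst hj
          simp [Pi.add_apply]
          omega
        · simp [Pi.add_apply, hj]
      obtain ⟨⟨μ', μ''⟩, hμp, huq2⟩ := hfactorΛ μ hμΛ _ _ hdμ
      obtain ⟨hμ'Λ, hμ''Λ, hsμ', heqμ, hdμ', hdμ''⟩ := hμp
      replace hμ'Λ : μ' ∈ Λset := hμ'Λ
      replace hμ''Λ : μ'' ∈ Λset := hμ''Λ
      replace hsμ' : 𝒳.src μ' = 𝒳.rng μ'' := hsμ'
      replace heqμ : μ = 𝒳.comp μ' μ'' := heqμ
      replace hdμ' : d μ' = (fun j => if j = Fin.last k then 0 else d μ j) := hdμ'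
      replace hdμ'' : d μ'' = (fun j => if j = Fin.last k then d e (Fin.last k) else 0) := hdμ''
      have hrμ' : 𝒳.rng μ' = 𝒳.rng μ := by rw [heqμ, 𝒳.rng_comp μ' μ'' hsμ']
      have hsγμ' : 𝒳.src γ = 𝒳.rng μ' := by rw [hsγμ, ← hrμ']
      have hassoc : e = 𝒳.comp (𝒳.comp γ μ') μ'' := by
        rw [heq, heqμ, ← 𝒳.assoc γ μ' μ'' hsγμ' hsμ']
      have hdcomb : d (𝒳.comp γ μ') = (fun j => if j = Fin.last k then 0 else d e j) := by
        rw [hd_comp γ hγΛ μ' hμ'Λ hsγμ', hdμ']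
        funext j
        have hj' := congrFun hde' j
        simp only [Pi.add_apply] at hj'
        by_cases hj : j = Fin.last k
        · subst hj
          simp [Pi.add_apply]
          omega
        · simp [Pi.add_apply, hj]
          omega
      have hpair := huq (𝒳.comp γ μ', μ'')
        ⟨hΛcomp γ hγΛ μ' hμ'Λ hsγμ', hμ''Λ,
         by rw [𝒳.src_comp γ μ' hsγμ']; exact hsμ', hassoc, hdcomb, hdμ''⟩
      have hte' : 𝒳.comp γ μ' = te := congrArg Prod.fst hpair
      exact ⟨μ', hμ'Λ, by rw [hdμ']; simp, hsγμ', hte'.symm⟩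
    exact ⟨te, hteΛ, by rw [hdte]; simp, ⟨e₁, he₁Λ, hste, heqte,
      fun j hj => by rw [hde₁]; simp [hj]⟩, hγside γ₁ μ₁ hγ₁Λ hγ₁0 hμ₁Λ hsγμ₁ heq₁,
      hγside γ₂ μ₂ hγ₂Λ hγ₂0 hμ₂Λ hsγμ₂ heq₂⟩
  have hchoice : ∀ e : X, ∃ te : X, e ∈ E → (te ∈ Λset ∧ d te (Fin.last k) = 0 ∧
      (∃ e₁, e₁ ∈ Λset ∧ 𝒳.src te = 𝒳.rng e₁ ∧ e = 𝒳.comp te e₁ ∧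
        ∀ j, j ≠ Fin.last k → d e₁ j = 0) ∧
      (∃ a, a ∈ Λset ∧ d a (Fin.last k) = 0 ∧ 𝒳.src γ₁ = 𝒳.rng a ∧ te = 𝒳.comp γ₁ a) ∧
      (∃ a, a ∈ Λset ∧ d a (Fin.last k) = 0 ∧ 𝒳.src γ₂ = 𝒳.rng a ∧ te = 𝒳.comp γ₂ a)) := by
    intro e
    by_cases he : e ∈ E
    · obtain ⟨te, h⟩ := hmemE e he
      exact ⟨te, fun _ => h⟩
    · exact ⟨e, fun h => absurd h he⟩
  choose t ht using hchoice
  -- the central factorisation of common extensions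
  have central : ∀ u₁ u₂ : X, 𝒳.src c₁ = 𝒳.rng u₁ → 𝒳.src c₂ = 𝒳.rng u₂ →
      𝒳.comp c₁ u₁ = 𝒳.comp c₂ u₂ →
      ∃ e ∈ E, ∃ y, 𝒳.src (t e) = 𝒳.rng y ∧ 𝒳.comp c₁ u₁ = 𝒳.comp (t e) y ∧
        (u₁ ∈ D → u₂ ∈ D → y ∈ D) := by
    intro u₁ u₂ hu₁ hu₂ hcc
    obtain ⟨ν₁, h₁, a₁, hν₁Λ, hh₁G, hsν₁, heq₁, ha₁Λ, hsγa₁, hν₁e, hDd₁⟩ :=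
      fside γ₁ g₁ c₁ hγ₁Λ hg₁G hsγ₁ hc₁e u₁ hu₁
    obtain ⟨ν₂, h₂, a₂, hν₂Λ, hh₂G, hsν₂, heq₂, ha₂Λ, hsγa₂, hν₂e, hDd₂⟩ :=
      fside γ₂ g₂ c₂ hγ₂Λ hg₂G hsγ₂ hc₂e u₂ hu₂
    obtain ⟨q, hq, huq⟩ := hfact (𝒳.comp c₁ u₁)
    have h1 := huq (ν₁, h₁) ⟨hν₁Λ, hh₁G, hsν₁, heq₁⟩
    have h2 := huq (ν₂, h₂) ⟨hν₂Λ, hh₂G, hsν₂, by rw [hcc]; exact heq₂⟩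
    have hpq := h1.trans h2.symm
    have hν12 : ν₁ = ν₂ := congrArg Prod.fst hpq
    have hνI : ν₁ ∈ 𝒳.idealIn Λset γ₁ ∩ 𝒳.idealIn Λset γ₂ :=
      ⟨⟨a₁, ha₁Λ, hsγa₁, hν₁e⟩, ⟨a₂, ha₂Λ, hsγa₂, by rw [hν12]; exact hν₂e⟩⟩
    rw [hEeq] at hνI
    obtain ⟨e, he, hmem⟩ := Set.mem_iUnion₂.1 hνI
    obtain ⟨sΛ, hsΛΛ, hse, hνe⟩ := hmem
    obtain ⟨hteΛ, hte0, ⟨e₁, he₁Λ, hste, hee, hde₁⟩, _, _⟩ := ht e he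
    have hssΛ : 𝒳.src sΛ = 𝒳.rng h₁ := by
      rw [← hsν₁, hνe, 𝒳.src_comp e sΛ hse]
    have hse₁ : 𝒳.src e₁ = 𝒳.rng sΛ := by
      rw [← hse, hee, 𝒳.src_comp (t e) e₁ hste]
    have hre₁ : 𝒳.src e₁ = 𝒳.rng (𝒳.comp sΛ h₁) := by
      rw [𝒳.rng_comp sΛ h₁ hssΛ]; exact hse₁
    have hy0 : 𝒳.src (t e) = 𝒳.rng (𝒳.comp e₁ (𝒳.comp sΛ h₁)) := by
      rw [𝒳.rng_comp e₁ (𝒳.comp sΛ h₁) hre₁]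
      exact hste
    have hxeq : 𝒳.comp c₁ u₁ = 𝒳.comp (t e) (𝒳.comp e₁ (𝒳.comp sΛ h₁)) := by
      have s1 : 𝒳.comp c₁ u₁ = 𝒳.comp e (𝒳.comp sΛ h₁) := by
        rw [heq₁, hνe, 𝒳.assoc e sΛ h₁ hse hssΛ]
      rw [s1, ← 𝒳.assoc (t e) e₁ (𝒳.comp sΛ h₁) hste hre₁, ← hee]
    refine ⟨e, he, 𝒳.comp e₁ (𝒳.comp sΛ h₁), hy0, hxeq, ?_⟩
    intro hu₁D hu₂D
    have ha₁0 := hDd₁ hu₁D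
    have hν₁0 : d ν₁ (Fin.last k) = 0 := by
      rw [hν₁e, hd_comp γ₁ hγ₁Λ a₁ ha₁Λ hsγa₁]
      simp [hγ₁0, ha₁0]
    have hdν : d ν₁ = d e + d sΛ := by rw [hνe]; exact hd_comp e (hEΛ he) sΛ hsΛΛ hse
    have hde_l : d e (Fin.last k) = 0 := by
      have h3 := congrFun hdν (Fin.last k)
      simp only [Pi.add_apply, hν₁0] at h3
      omega
    have hsΛ0 : d sΛ (Fin.last k) = 0 := by
      have h3 := congrFun hdν (Fin.last k)
      simp only [Pi.add_apply, hν₁0] at h3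
      omega
    have hde₁0 : d e₁ = 0 := by
      have h4 : d e = d (t e) + d e₁ := by
        conv_lhs => rw [hee]
        exact hd_comp (t e) hteΛ e₁ he₁Λ hste
      funext j
      by_cases hj : j = Fin.last k
      · subst hj
        have h5 := congrFun h4 (Fin.last k)
        simp only [Pi.add_apply] at h5
        rw [hde_l] at h5
        simp only [Pi.zero_apply]
        omega
      · simp only [Pi.zero_apply]
        exact hde₁ j hj
    have he₁unit : e₁ = 𝒳.rng e₁ := degzero e₁ he₁Λ hde₁0
    have hsrce₁ : 𝒳.src e₁ = e₁ := by
      rw [he₁unit]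
      exact 𝒳.src_rng e₁
    have h6 : e₁ = 𝒳.rng (𝒳.comp sΛ h₁) := by
      rw [𝒳.rng_comp sΛ h₁ hssΛ, ← hse₁]
      exact hsrce₁.symm
    have hyeq : 𝒳.comp e₁ (𝒳.comp sΛ h₁) = 𝒳.comp sΛ h₁ := by
      rw [h6]
      exact 𝒳.rng_comp_self _
    rw [hyeq]
    exact memD sΛ h₁ hsΛΛ hsΛ0 hh₁G hssΛ
  -- antichain extraction
  obtain ⟨F, hFsub, hFanti, hFcover⟩ := exists_antichain' (fun a b => a ∈ 𝒳.idealIn D b)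
    (fun a b c hab hbc => itrans b c hbc hab) selfIn (E.image t)
  have hFD : ∀ f ∈ E.image t, f ∈ D := by
    intro f hf
    obtain ⟨e, he, rfl⟩ := Finset.mem_image.1 hf
    obtain ⟨h1, h2, _, _, _⟩ := ht e he
    exact hΓD (t e) h1 h2
  have tIn : ∀ e ∈ E, t e ∈ 𝒳.idealIn D c₁ ∧ t e ∈ 𝒳.idealIn D c₂ := by
    intro e he
    obtain ⟨_, _, _, ⟨b₁, hb₁Λ, hb₁0, hsγb₁, hteb₁⟩, ⟨b₂, hb₂Λ, hb₂0, hsγb₂, hteb₂⟩⟩ := ht e he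
    obtain ⟨A₁, hA₁D, hscA₁, hcA₁, _⟩ := key2 γ₁ g₁ c₁ hγ₁Λ hg₁G hsγ₁ hc₁e b₁ hb₁Λ hb₁0 hsγb₁
    obtain ⟨A₂, hA₂D, hscA₂, hcA₂, _⟩ := key2 γ₂ g₂ c₂ hγ₂Λ hg₂G hsγ₂ hc₂e b₂ hb₂Λ hb₂0 hsγb₂
    exact ⟨⟨A₁, hA₁D, hscA₁, by rw [hteb₁]; exact hcA₁⟩,
      ⟨A₂, hA₂D, hscA₂, by rw [hteb₂]; exact hcA₂⟩⟩
  refine ⟨F, ?_, hFanti, ?_, ?_⟩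
  · intro f hf
    exact hFD f (hFsub hf)
  · apply Set.Subset.antisymm
    · rintro x ⟨⟨u₁, hu₁D, hsu₁, hxu₁⟩, ⟨u₂, hu₂D, hsu₂, hxu₂⟩⟩
      obtain ⟨e, he, y, hsty, hxeq, hyD⟩ := central u₁ u₂ hsu₁ hsu₂ (hxu₁.symm.trans hxu₂)
      have hxIn : x ∈ 𝒳.idealIn D (t e) := ⟨y, hyD hu₁D hu₂D, hsty, by rw [hxu₁]; exact hxeq⟩
      obtain ⟨f, hfF, hlef⟩ := hFcover (t e) (Finset.mem_image_of_mem t he)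
      exact Set.mem_iUnion₂.2 ⟨f, hfF, itrans (t e) f hlef hxIn⟩
    · intro x hx
      obtain ⟨f, hfF, hxf⟩ := Set.mem_iUnion₂.1 hx
      obtain ⟨e', he', rfl⟩ := Finset.mem_image.1 (hFsub hfF)
      obtain ⟨hI1, hI2⟩ := tIn e' he'
      exact ⟨itrans (t e') c₁ hI1 hxf, itrans (t e') c₂ hI2 hxf⟩
  · intro x₁ x₂ hx₁ hx₂ hcc
    obtain ⟨e, he, y₀, hsty₀, hxeq, _⟩ := central x₁ x₂ hx₁ hx₂ hcc
    obtain ⟨f, hfF, hlef⟩ := hFcover (t e) (Finset.mem_image_of_mem t he)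
    obtain ⟨w, hwD, hsfw, htew⟩ := hlef
    obtain ⟨e', he', hfe'⟩ := Finset.mem_image.1 (hFsub hfF)
    obtain ⟨_, _, _, ⟨b₁, hb₁Λ, hb₁0, hsγb₁, hteb₁⟩, ⟨b₂, hb₂Λ, hb₂0, hsγb₂, hteb₂⟩⟩ := ht e' he'
    obtain ⟨A₁, hA₁D, hscA₁, hcA₁, hsA₁⟩ := key2 γ₁ g₁ c₁ hγ₁Λ hg₁G hsγ₁ hc₁e b₁ hb₁Λ hb₁0 hsγb₁
    obtain ⟨A₂, hA₂D, hscA₂, hcA₂, hsA₂⟩ := key2 γ₂ g₂ c₂ hγ₂Λ hg₂G hsγ₂ hc₂e b₂ hb₂Λ hb₂0 hsγb₂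
    have hfA₁ : f = 𝒳.comp c₁ A₁ := by rw [← hfe', hteb₁]; exact hcA₁
    have hfA₂ : f = 𝒳.comp c₂ A₂ := by rw [← hfe', hteb₂]; exact hcA₂
    have hsw : 𝒳.src w = 𝒳.rng y₀ := by
      have hs1 : 𝒳.src (t e) = 𝒳.src w := by rw [htew, 𝒳.src_comp f w hsfw]
      rw [← hs1]; exact hsty₀
    have hrwy : 𝒳.rng (𝒳.comp w y₀) = 𝒳.rng w := 𝒳.rng_comp w y₀ hsw
    have hsfy : 𝒳.src f = 𝒳.rng (𝒳.comp w y₀) := by rw [hrwy]; exact hsfw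
    have hxfy : 𝒳.comp c₁ x₁ = 𝒳.comp f (𝒳.comp w y₀) := by
      rw [hxeq, htew, 𝒳.assoc f w y₀ hsfw hsw]
    have hsfb : 𝒳.src f = 𝒳.src b₁ := by rw [← hfe', hteb₁, 𝒳.src_comp γ₁ b₁ hsγb₁]
    have hsA₁y : 𝒳.src A₁ = 𝒳.rng (𝒳.comp w y₀) := by rw [hsA₁, ← hsfb]; exact hsfy
    have hsfb₂ : 𝒳.src f = 𝒳.src b₂ := by rw [← hfe', hteb₂, 𝒳.src_comp γ₂ b₂ hsγb₂]
    have hsA₂y : 𝒳.src A₂ = 𝒳.rng (𝒳.comp w y₀) := by rw [hsA₂, ← hsfb₂]; exact hsfy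
    have hx₁eq : x₁ = 𝒳.comp A₁ (𝒳.comp w y₀) := by
      apply Xc c₁ x₁ (𝒳.comp A₁ (𝒳.comp w y₀)) hx₁
        (by rw [𝒳.rng_comp A₁ (𝒳.comp w y₀) hsA₁y]; exact hscA₁)
      rw [hxfy, hfA₁, 𝒳.assoc c₁ A₁ (𝒳.comp w y₀) hscA₁ hsA₁y]
    have hx₂eq : x₂ = 𝒳.comp A₂ (𝒳.comp w y₀) := by
      apply Xc c₂ x₂ (𝒳.comp A₂ (𝒳.comp w y₀)) hx₂
        (by rw [𝒳.rng_comp A₂ (𝒳.comp w y₀) hsA₂y]; exact hscA₂)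
      rw [← hcc, hxfy, hfA₂, 𝒳.assoc c₂ A₂ (𝒳.comp w y₀) hscA₂ hsA₂y]
    exact ⟨f, hfF, A₁, A₂, 𝒳.comp w y₀, hscA₁, hscA₂, hfA₁, hfA₂, hsA₁y, hsA₂y, hx₁eq, hx₂eq⟩
end

section
/- Fix k ≥ 0 and let Λ be a locally convex (k+1)-graph. Let Γ = Λ^{ℕ^k × {0}}. Then every finite exhaustive set in Γ is exhaustive in Λ: if v ∈ Λ^0 and F ⊆ vΓ is finite and exhaustive in Γ (every γ ∈ vΓ has γΓ ∩ μΓ ≠ ∅ for some μ ∈ F), then for every λ ∈ vΛ there exists μ ∈ F with λΛ ∩ μΛ ≠ ∅. -/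
section Aux

variable {k : ℕ} {C : Type*} (Λ : KGraph k C)

lemma kg_d_src (a : C) : Λ.d (Λ.src a) = 0 := by
  have h := Λ.d_comp a (Λ.src a) (Λ.rng_src a).symm
  rw [Λ.comp_src] at h
  funext i
  have := congrFun h i
  simp only [Pi.add_apply, Pi.zero_apply] at this ⊢
  omega

lemma kg_d_rng (a : C) : Λ.d (Λ.rng a) = 0 := by
  have h := Λ.d_comp (Λ.rng a) a (Λ.src_rng a)
  rw [Λ.rng_comp_self] at h
  funext i
  have := congrFun h i
  simp only [Pi.add_apply, Pi.zero_apply] at this ⊢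
  omega

lemma kg_eq_of_d_zero (a : C) (h : Λ.d a = 0) : a = Λ.src a ∧ a = Λ.rng a := by
  obtain ⟨p, -, hu⟩ := Λ.factor a 0 0 (by simp [h])
  have h1 : p = (Λ.rng a, a) :=
    (hu (Λ.rng a, a) ⟨Λ.src_rng a, (Λ.rng_comp_self a).symm, kg_d_rng Λ a, h⟩).symm
  have h2 : p = (a, Λ.src a) :=
    (hu (a, Λ.src a) ⟨(Λ.rng_src a).symm, (Λ.comp_src a).symm, h, kg_d_src Λ a⟩).symm
  have heq := h1.symm.trans h2
  rw [Prod.mk.injEq] at heq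
  exact ⟨heq.2, heq.1.symm⟩

lemma kg_exists_factor (a : C) (m n : Fin k → ℕ) (h : Λ.d a = m + n) :
    ∃ b c, Λ.src b = Λ.rng c ∧ a = Λ.comp b c ∧ Λ.d b = m ∧ Λ.d c = n := by
  obtain ⟨p, hp, -⟩ := Λ.factor a m n h
  exact ⟨p.1, p.2, hp.1, hp.2.1, hp.2.2.1, hp.2.2.2⟩

lemma kg_exists_edge_factor (a : C) (i : Fin k) (h : 1 ≤ Λ.d a i) :
    ∃ e b, Λ.src e = Λ.rng b ∧ a = Λ.comp e b ∧ Λ.d e = Pi.single i 1 := by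
  have hfac : Λ.d a = Pi.single i 1 + (Λ.d a - Pi.single i 1) := by
    funext j
    by_cases hj : j = i <;>
      simp only [Pi.add_apply, Pi.sub_apply, Pi.single_apply, hj,
        ite_true, ite_false] <;> omega
  obtain ⟨e, b, h1, h2, h3, -⟩ := kg_exists_factor Λ a (Pi.single i 1)
    (Λ.d a - Pi.single i 1) hfac
  exact ⟨e, b, h1, h2, h3⟩

/-- Existence of an element of `wΛ^{≤ N}`. -/
lemma kg_exists_le_path : ∀ (n : ℕ) (N : Fin k → ℕ), (∑ i, N i) ≤ n →
    ∀ w : C, Λ.src w = w →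
    ∃ η, Λ.rng η = w ∧ Λ.d η ≤ N ∧
      (∀ i, Λ.d η i < N i → ¬∃ e, Λ.rng e = Λ.src η ∧ Λ.d e = Pi.single i 1) := by
  intro n
  induction n with
  | zero =>
    intro N hN w hw
    have hdw : Λ.d w = 0 := by rw [← hw]; exact kg_d_src Λ w
    refine ⟨w, ?_, ?_, ?_⟩
    · rw [← hw, Λ.rng_src, hw]
    · intro i
      simp [hdw]
    · intro i hi
      have : N i = 0 :=
        Finset.sum_eq_zero_iff.mp (Nat.le_zero.mp hN) i (Finset.mem_univ i)
      rw [hdw] at hi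
      simp only [Pi.zero_apply] at hi
      omega
  | succ n ih =>
    intro N hN w hw
    by_cases h : ∃ i e, 0 < N i ∧ Λ.rng e = w ∧ Λ.d e = Pi.single i 1
    · obtain ⟨i, e, hNi, hre, hde⟩ := h
      have hs1 : (Pi.single i 1 : Fin k → ℕ) i = 1 := Pi.single_eq_same i 1
      have hsv : ∀ j, (Pi.single i 1 : Fin k → ℕ) j = if j = i then 1 else 0 := by
        intro j
        by_cases hji : j = i
        · subst hji; simp [hs1]
        · simp [Pi.single_eq_of_ne hji, hji]
      have hsum : (∑ j, (N - Pi.single i 1 : Fin k → ℕ) j) ≤ n := by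
        have hlt : (∑ j, (N - Pi.single i 1 : Fin k → ℕ) j) < ∑ j, N j := by
          apply Finset.sum_lt_sum
          · intro j _
            simp only [Pi.sub_apply]
            omega
          · refine ⟨i, Finset.mem_univ i, ?_⟩
            simp only [Pi.sub_apply, hs1]
            omega
        omega
      obtain ⟨η', hrη', hdη', hmax'⟩ := ih (N - Pi.single i 1) hsum (Λ.src e) (Λ.src_src e)
      have hcomp : Λ.src e = Λ.rng η' := hrη'.symm
      refine ⟨Λ.comp e η', ?_, ?_, ?_⟩
      · rw [Λ.rng_comp e η' hcomp, hre]
      · intro j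
        have hd := congrFun (Λ.d_comp e η' hcomp) j
        have h1 := hdη' j
        have h2 := congrFun hde j
        rw [hsv j] at h2
        simp only [Pi.add_apply, Pi.sub_apply, hsv j] at hd h1
        rw [hd]
        by_cases hj : j = i <;> simp only [hj, ite_true, ite_false] at h1 h2 ⊢ <;> omega
      · intro j hj
        rw [Λ.src_comp e η' hcomp]
        have hd := congrFun (Λ.d_comp e η' hcomp) j
        have h2 := congrFun hde j
        rw [hsv j] at h2
        simp only [Pi.add_apply] at hd
        apply hmax' j
        simp only [Pi.sub_apply, hsv j]
        rw [hd] at hj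
        by_cases hji : j = i <;> simp only [hji, ite_true, ite_false] at h2 hj ⊢ <;> omega
    · push_neg at h
      have hdw : Λ.d w = 0 := by rw [← hw]; exact kg_d_src Λ w
      refine ⟨w, ?_, ?_, ?_⟩
      · rw [← hw, Λ.rng_src, hw]
      · intro i
        simp [hdw]
      · intro i hi
        rw [← hw, kg_d_src] at hi
        simp only [Pi.zero_apply] at hi
        rintro ⟨e, hre, hde⟩
        rw [← hw, Λ.src_src, hw] at hre
        exact absurd hde (h i e hi hre)

/-- local convexity pushes edges along paths of pure degree. -/
lemma kg_edge_transfer (hlc : Λ.LocallyConvex) (ℓ j : Fin k) (hj : j ≠ ℓ) :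
    ∀ (n : ℕ) (ζ : C), Λ.d ζ = Pi.single ℓ n →
    (∃ f, Λ.rng f = Λ.rng ζ ∧ Λ.d f = Pi.single j 1) →
    ∃ f, Λ.rng f = Λ.src ζ ∧ Λ.d f = Pi.single j 1 := by
  intro n
  induction n with
  | zero =>
    intro ζ hdζ hf
    have h0 : Λ.d ζ = 0 := by rw [hdζ]; simp
    obtain ⟨hs, hr⟩ := kg_eq_of_d_zero Λ ζ h0
    rw [← hs]
    rwa [← hr] at hf
  | succ n ih =>
    intro ζ hdζ hf
    obtain ⟨e, b, hcomp, hζ, hde⟩ := kg_exists_edge_factor Λ ζ ℓ (by rw [hdζ]; simp)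
    have hdb : Λ.d b = Pi.single ℓ n := by
      have hd := Λ.d_comp e b hcomp
      rw [← hζ, hdζ, hde] at hd
      funext j'
      have := congrFun hd j'
      simp only [Pi.add_apply, Pi.single_apply] at this ⊢
      by_cases hj' : j' = ℓ <;> simp only [hj', ite_true, ite_false] at this ⊢ <;> omega
    have hre : Λ.rng e = Λ.rng ζ := by rw [hζ, Λ.rng_comp e b hcomp]
    have hstep := hlc ℓ j (Ne.symm hj) e hde ?_
    · have := ih b hdb ?_
      · rwa [hζ, Λ.src_comp e b hcomp]
      · rwa [← hcomp]
    · rwa [hre]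

/-- truncation of an extension. -/
lemma kg_trunc (a c : C) (h : Λ.src a = Λ.rng c) (p : Fin k → ℕ)
    (hap : Λ.d a ≤ p) (hpx : p ≤ Λ.d (Λ.comp a c)) :
    ∃ χ ρ, Λ.src χ = Λ.rng ρ ∧ Λ.comp a c = Λ.comp χ ρ ∧ Λ.d χ = p ∧
      ∃ b, Λ.src a = Λ.rng b ∧ χ = Λ.comp a b := by
  have hdx := Λ.d_comp a c h
  have hfac : Λ.d c = (p - Λ.d a) + (Λ.d c - (p - Λ.d a)) := by
    funext i
    have h1 := hap i
    have h2 := hpx i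
    have h3 := congrFun hdx i
    simp only [Pi.add_apply, Pi.sub_apply] at h1 h2 h3 ⊢
    omega
  obtain ⟨c1, c2, h12, hc, hdc1, hdc2⟩ := kg_exists_factor Λ c (p - Λ.d a)
    (Λ.d c - (p - Λ.d a)) hfac
  have hac1 : Λ.src a = Λ.rng c1 := by
    rw [h, hc, Λ.rng_comp c1 c2 h12]
  refine ⟨Λ.comp a c1, c2, ?_, ?_, ?_, c1, hac1, rfl⟩
  · rw [Λ.src_comp a c1 hac1]; exact h12
  · rw [hc, Λ.assoc a c1 c2 hac1 h12]
  · rw [Λ.d_comp a c1 hac1, hdc1]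
    funext i
    have h1 := hap i
    simp only [Pi.add_apply, Pi.sub_apply] at h1 ⊢
    omega

end Aux

theorem kgraph_exhaustive {k : ℕ} {C : Type*} [Countable C]
    (Λ : KGraph (k + 1) C) (hlc : Λ.LocallyConvex)
    (v : C) (hv : Λ.src v = v)
    (Γ : Set C) (hΓ : Γ = {x : C | Λ.d x (Fin.last k) = 0})
    (F : Finset C) (hFΓ : ∀ μ ∈ F, μ ∈ Γ ∧ Λ.rng μ = v)
    (hexh : ∀ γ ∈ Γ, Λ.rng γ = v →
      ∃ μ ∈ F, (Λ.toCatStruct.idealIn Γ γ ∩ Λ.toCatStruct.idealIn Γ μ).Nonempty) :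
    ∀ lam : C, Λ.rng lam = v →
      ∃ μ ∈ F, (Λ.toCatStruct.ideal lam ∩ Λ.toCatStruct.ideal μ).Nonempty := by
  classical
  intro lam hrlam
  set ℓ : Fin (k + 1) := Fin.last k with hℓ
  set N : Fin (k + 1) → ℕ := fun i => if i = ℓ then 0 else F.sup (fun μ => Λ.d μ i) with hN
  clear_value N
  obtain ⟨η, hrη, hdη, hηmax⟩ :=
    kg_exists_le_path Λ (∑ i, N i) N le_rfl (Λ.src lam) (Λ.src_src lam)
  have hcle : Λ.src lam = Λ.rng η := hrη.symm
  set x0 := Λ.comp lam η with hx0def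
  clear_value x0
  have hdx0 : Λ.d x0 = Λ.d lam + Λ.d η := by
    rw [hx0def]
    exact Λ.d_comp lam η hcle
  have hfac : Λ.d x0 = (fun i => if i = ℓ then 0 else Λ.d x0 i) + Pi.single ℓ (Λ.d x0 ℓ) := by
    funext i
    by_cases hi : i = ℓ
    · subst hi; simp
    · simp [hi, Pi.single_eq_of_ne hi]
  obtain ⟨γ, ζ, hγζ, hx0, hdγ, hdζ⟩ := kg_exists_factor Λ x0 _ _ hfac
  have hdγℓ : Λ.d γ ℓ = 0 := by simp [hdγ]
  have hγΓ : γ ∈ Γ := by rw [hΓ]; exact hdγℓ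
  have hrγ : Λ.rng γ = v := by
    have h1 : Λ.rng x0 = v := by rw [hx0def, Λ.rng_comp lam η hcle, hrlam]
    rw [hx0, Λ.rng_comp γ ζ hγζ] at h1
    exact h1
  obtain ⟨μ, hμF, x, hx1, hx2⟩ := hexh γ hγΓ hrγ
  obtain ⟨α, hαΓ, hγα, hxγ⟩ := hx1
  obtain ⟨β, hβΓ, hμβ, hxμ⟩ := hx2
  have hdμℓ : Λ.d μ ℓ = 0 := by
    have h := (hFΓ μ hμF).1
    rw [hΓ] at h
    exact h
  set p : Fin (k + 1) → ℕ := fun i => max (Λ.d γ i) (Λ.d μ i) with hp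
  clear_value p
  have hdxγ : Λ.d x = Λ.d γ + Λ.d α := by rw [hxγ]; exact Λ.d_comp γ α hγα
  have hdxμ : Λ.d x = Λ.d μ + Λ.d β := by rw [hxμ]; exact Λ.d_comp μ β hμβ
  have hγp : Λ.d γ ≤ p := by
    intro i
    simp only [hp]
    exact le_max_left _ _
  have hμp : Λ.d μ ≤ p := by
    intro i
    simp only [hp]
    exact le_max_right _ _
  have hpx : p ≤ Λ.d x := by
    intro i
    have h1 := congrFun hdxγ i
    have h2 := congrFun hdxμ i
    simp only [Pi.add_apply] at h1 h2
    simp only [hp]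
    omega
  obtain ⟨χ1, ρ1, hc1, he1, hd1, b1, hb1c, hb1⟩ :=
    kg_trunc Λ γ α hγα p hγp (by rw [← hxγ]; exact hpx)
  obtain ⟨χ2, ρ2, hc2, he2, hd2, b2, hb2c, hb2⟩ :=
    kg_trunc Λ μ β hμβ p hμp (by rw [← hxμ]; exact hpx)
  rw [← hxγ] at he1
  rw [← hxμ] at he2
  have hxp : Λ.d x = p + (Λ.d x - p) := by
    funext i
    show Λ.d x i = p i + (Λ.d x i - p i)
    exact (Nat.add_sub_cancel' (hpx i)).symm
  obtain ⟨q, -, hq⟩ := Λ.factor x p (Λ.d x - p) hxp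
  have hdρ1 : Λ.d ρ1 = Λ.d x - p := by
    have h := Λ.d_comp χ1 ρ1 hc1
    rw [← he1, hd1] at h
    funext i
    have h1 := congrFun h i
    have h2 := hpx i
    simp only [Pi.add_apply, Pi.sub_apply] at h1 ⊢
    omega
  have hdρ2 : Λ.d ρ2 = Λ.d x - p := by
    have h := Λ.d_comp χ2 ρ2 hc2
    rw [← he2, hd2] at h
    funext i
    have h1 := congrFun h i
    have h2 := hpx i
    simp only [Pi.add_apply, Pi.sub_apply] at h1 ⊢
    omega
  have huniq : χ1 = χ2 := by
    have e1 := hq (χ1, ρ1) ⟨hc1, he1, hd1, hdρ1⟩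
    have e2 := hq (χ2, ρ2) ⟨hc2, he2, hd2, hdρ2⟩
    have h := e1.trans e2.symm
    rw [Prod.mk.injEq] at h
    exact h.1
  have hdχ1 : Λ.d χ1 = Λ.d γ + Λ.d b1 := by rw [hb1]; exact Λ.d_comp γ b1 hb1c
  have hpγ : p = Λ.d γ := by
    funext i
    by_cases hi : i = ℓ
    · subst hi
      simp only [hp]
      rw [hdγℓ, hdμℓ]
      simp
    · by_contra hne
      have hlt : Λ.d γ i < Λ.d μ i := by
        simp only [hp] at hne
        omega
      have hb1i : 1 ≤ Λ.d b1 i := by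
        have h1 := congrFun hdχ1 i
        rw [hd1] at h1
        simp only [Pi.add_apply, hp] at h1
        omega
      obtain ⟨e, b', hcb, heb, hdei⟩ := kg_exists_edge_factor Λ b1 i hb1i
      have hre : Λ.rng e = Λ.src γ := by
        rw [hb1c, heb, Λ.rng_comp e b' hcb]
      have hedge : ∃ f, Λ.rng f = Λ.src ζ ∧ Λ.d f = Pi.single i 1 := by
        apply kg_edge_transfer Λ hlc ℓ i hi (Λ.d x0 ℓ) ζ hdζ
        exact ⟨e, by rw [hre]; exact hγζ, hdei⟩
      have hsζ : Λ.src ζ = Λ.src η := by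
        have h1 : Λ.src x0 = Λ.src ζ := by rw [hx0]; exact Λ.src_comp γ ζ hγζ
        have h2 : Λ.src x0 = Λ.src η := by
          rw [hx0def]
          exact Λ.src_comp lam η hcle
        rw [← h1, h2]
      rw [hsζ] at hedge
      have hηi : N i ≤ Λ.d η i := by
        by_contra hlt2
        exact hηmax i (by omega) hedge
      have hNi : Λ.d μ i ≤ N i := by
        simp only [hN, if_neg hi]
        exact Finset.le_sup (f := fun μ => Λ.d μ i) hμF
      have hγi : Λ.d γ i = Λ.d lam i + Λ.d η i := by
        have h1 := congrFun hdx0 i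
        simp only [Pi.add_apply] at h1
        simp only [hdγ, if_neg hi]
        exact h1
      omega
  have hdb1 : Λ.d b1 = 0 := by
    rw [hd1, hpγ] at hdχ1
    funext i
    have h := congrFun hdχ1 i
    simp only [Pi.add_apply, Pi.zero_apply] at h ⊢
    omega
  have hb1id : b1 = Λ.src γ := by
    obtain ⟨-, h2⟩ := kg_eq_of_d_zero Λ b1 hdb1
    rw [h2, ← hb1c]
  have hχγ : χ1 = γ := by rw [hb1, hb1id, Λ.comp_src]
  have hγμ : γ = Λ.comp μ b2 := by rw [← hχγ, huniq, hb2]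
  have hsb2 : Λ.src b2 = Λ.rng ζ := by
    have h1 : Λ.src γ = Λ.src b2 := by rw [hγμ]; exact Λ.src_comp μ b2 hb2c
    rw [← h1]
    exact hγζ
  refine ⟨μ, hμF, x0, ⟨⟨η, hcle, hx0def⟩, ⟨Λ.comp b2 ζ, ?_, ?_⟩⟩⟩
  · rw [Λ.rng_comp b2 ζ hsb2]
    exact hb2c
  · rw [hx0, hγμ, Λ.assoc μ b2 ζ hb2c hsb2]
end

section
/- Fix k ≥ 0. Let G be a discrete groupoid acting self-similarly on a locally convex (k+1)-graph Λ, and let Γ = Λ^{ℕ^k × {0}}. Then every finite exhaustive set in Γ ⋈ G is exhaustive in Λ ⋈ G. -/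
section Aux

variable {X : Type*}

lemma cancel_aux (𝒳 : CatStruct X) (a g g' t : X)
    (h1 : 𝒳.src a = 𝒳.rng g) (h2 : 𝒳.src g' = 𝒳.rng g) (h3 : 𝒳.rng g' = 𝒳.src g)
    (h4 : 𝒳.comp g g' = 𝒳.rng g) (h5 : 𝒳.rng t = 𝒳.src a) :
    𝒳.comp (𝒳.comp a g) (𝒳.comp g' t) = 𝒳.comp a t := by
  have hg't : 𝒳.src g' = 𝒳.rng t := by rw [h2, ← h1, h5]
  have e1 : 𝒳.rng (𝒳.comp g' t) = 𝒳.rng g' := 𝒳.rng_comp g' t hg't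
  have e2 : 𝒳.comp (𝒳.comp a g) (𝒳.comp g' t)
      = 𝒳.comp a (𝒳.comp g (𝒳.comp g' t)) :=
    𝒳.assoc a g _ h1 (by rw [e1, h3])
  have e3 : 𝒳.comp g (𝒳.comp g' t) = 𝒳.comp (𝒳.comp g g') t :=
    (𝒳.assoc g g' t h3.symm hg't).symm
  rw [e2, e3, h4]
  have hrr : 𝒳.rng g = 𝒳.rng t := by rw [← h1, h5]
  rw [hrr, 𝒳.rng_comp_self]

lemma extend_aux {k : ℕ} (𝒳 : CatStruct X) (Λset : Set X)
    (hΛunits : ∀ x : X, 𝒳.src x ∈ Λset ∧ 𝒳.rng x ∈ Λset)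
    (hΛcomp : ∀ a ∈ Λset, ∀ b ∈ Λset, 𝒳.src a = 𝒳.rng b → 𝒳.comp a b ∈ Λset)
    (d : X → Fin (k + 1) → ℕ)
    (hd_comp : ∀ a ∈ Λset, ∀ b ∈ Λset, 𝒳.src a = 𝒳.rng b →
      d (𝒳.comp a b) = d a + d b)
    (p : Fin (k + 1) → ℕ) :
    ∀ n : ℕ, ∀ μ, μ ∈ Λset → (∀ i, d μ i ≤ p i) → (∑ i, (p i - d μ i)) ≤ n →
      ∃ lam', lam' ∈ Λset ∧ (∃ τ ∈ Λset, 𝒳.src μ = 𝒳.rng τ ∧ lam' = 𝒳.comp μ τ) ∧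
        (∀ i, d lam' i ≤ p i) ∧
        (∀ i, d lam' i < p i →
          ¬∃ e ∈ Λset, 𝒳.rng e = 𝒳.src lam' ∧ d e = Pi.single i 1) := by
  intro n
  induction n using Nat.strong_induction_on with
  | _ n ih =>
    intro μ hμ hle hsum
    by_cases hdef : ∃ i, d μ i < p i ∧
        ∃ e ∈ Λset, 𝒳.rng e = 𝒳.src μ ∧ d e = Pi.single i 1
    · obtain ⟨i, hi, e, heΛ, hre, hde⟩ := hdef
      have hse : 𝒳.src μ = 𝒳.rng e := hre.symm
      have hμ₂Λ : 𝒳.comp μ e ∈ Λset := hΛcomp μ hμ e heΛ hse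
      have hd₂ : d (𝒳.comp μ e) = d μ + d e := hd_comp μ hμ e heΛ hse
      have hd₂' : ∀ j, d (𝒳.comp μ e) j = d μ j + (if j = i then 1 else 0) := by
        intro j
        have h1 := congrFun hd₂ j
        rw [hde] at h1
        simpa [Pi.single_apply] using h1
      have hle₂ : ∀ j, d (𝒳.comp μ e) j ≤ p j := by
        intro j
        have h := hd₂' j
        by_cases hj : j = i
        · rw [if_pos hj] at h; subst hj; omega
        · rw [if_neg hj] at h; have := hle j; omega
      have hlt : ∑ j, (p j - d (𝒳.comp μ e) j) < ∑ j, (p j - d μ j) := by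
        apply Finset.sum_lt_sum
        · intro j _
          have h := hd₂' j
          by_cases hj : j = i
          · rw [if_pos hj] at h; omega
          · rw [if_neg hj] at h; omega
        · refine ⟨i, Finset.mem_univ i, ?_⟩
          have h := hd₂' i
          rw [if_pos rfl] at h
          omega
      have hpos : 1 ≤ ∑ j, (p j - d μ j) := by
        have h1 : p i - d μ i ≤ ∑ j, (p j - d μ j) :=
          Finset.single_le_sum (f := fun j => p j - d μ j)
            (fun j _ => Nat.zero_le _) (Finset.mem_univ i)
        omega
      obtain ⟨lam', h1, ⟨τ', hτ'Λ, hsτ', hlam'e⟩, h3, h4⟩ :=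
        ih (n - 1) (by omega) (𝒳.comp μ e) hμ₂Λ hle₂ (by omega)
      have seτ' : 𝒳.src e = 𝒳.rng τ' := by
        rw [← 𝒳.src_comp μ e hse]; exact hsτ'
      refine ⟨lam', h1, ⟨𝒳.comp e τ', hΛcomp e heΛ τ' hτ'Λ seτ', ?_, ?_⟩, h3, h4⟩
      · rw [𝒳.rng_comp e τ' seτ', hse]
      · rw [hlam'e, 𝒳.assoc μ e τ' hse seτ']
    · refine ⟨μ, hμ, ⟨𝒳.src μ, (hΛunits μ).1, (𝒳.rng_src μ).symm, (𝒳.comp_src μ).symm⟩,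
        hle, ?_⟩
      intro i hi hex
      exact hdef ⟨i, hi, hex⟩

lemma prop_aux {k : ℕ} (𝒳 : CatStruct X) (Λset : Set X)
    (d : X → Fin (k + 1) → ℕ)
    (hfactorΛ : ∀ lam ∈ Λset, ∀ m n : Fin (k + 1) → ℕ, d lam = m + n →
      ∃! p : X × X, p.1 ∈ Λset ∧ p.2 ∈ Λset ∧ 𝒳.src p.1 = 𝒳.rng p.2 ∧
        lam = 𝒳.comp p.1 p.2 ∧ d p.1 = m ∧ d p.2 = n)
    (hlc : ∀ i j : Fin (k + 1), i ≠ j → ∀ e ∈ Λset, d e = Pi.single i 1 →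
      (∃ f ∈ Λset, 𝒳.rng f = 𝒳.rng e ∧ d f = Pi.single j 1) →
      ∃ f ∈ Λset, 𝒳.rng f = 𝒳.src e ∧ d f = Pi.single j 1)
    (hunit : ∀ a ∈ Λset, d a = 0 → 𝒳.src a = 𝒳.rng a)
    (j : Fin (k + 1)) (hj : j ≠ Fin.last k) :
    ∀ m : ℕ, ∀ ν, ν ∈ Λset → d ν = Pi.single (Fin.last k) m →
      (∃ e ∈ Λset, 𝒳.rng e = 𝒳.rng ν ∧ d e = Pi.single j 1) →
      ∃ e ∈ Λset, 𝒳.rng e = 𝒳.src ν ∧ d e = Pi.single j 1 := by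
  intro m
  induction m with
  | zero =>
    intro ν hν hdν hex
    have h : 𝒳.src ν = 𝒳.rng ν := hunit ν hν (by simpa using hdν)
    rwa [h]
  | succ m ihm =>
    intro ν hν hdν hex
    have hsum : d ν = Pi.single (Fin.last k) 1 + Pi.single (Fin.last k) m := by
      funext i
      rw [hdν]
      by_cases hi : i = Fin.last k
      · simp [Pi.single_apply, hi]; omega
      · simp [Pi.single_apply, hi]
    obtain ⟨⟨ν₁, ν₂⟩, ⟨hν₁, hν₂, hs12, hνe, hd1, hd2⟩, -⟩ := hfactorΛ ν hν _ _ hsum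
    obtain ⟨e, heΛ, hre, hde⟩ := hex
    have hre1 : 𝒳.rng e = 𝒳.rng ν₁ := by
      rw [hre, hνe, 𝒳.rng_comp ν₁ ν₂ hs12]
    obtain ⟨e₁, he₁, hre₁, hde₁⟩ := hlc (Fin.last k) j (Ne.symm hj) ν₁ hν₁ hd1
      ⟨e, heΛ, hre1, hde⟩
    obtain ⟨e₂, he₂, hre₂, hde₂⟩ := ihm ν₂ hν₂ hd2 ⟨e₁, he₁, by rw [hre₁, hs12], hde₁⟩
    exact ⟨e₂, he₂, by rw [hre₂, hνe, 𝒳.src_comp ν₁ ν₂ hs12], hde₂⟩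

end Aux

/-- for a self-similar action of a discrete groupoid `G` on a
locally convex `(k+1)`-graph `Λ`, every finite exhaustive set in `Γ ⋈ G`
(where `Γ = Λ^{ℕ^k × {0}}`) is exhaustive in `Λ ⋈ G`. -/
theorem sub_zs_exhaustive {k : ℕ} {X : Type*} (𝒳 : CatStruct X)
    (Λset Gset : Set X)
    (hΛunits : ∀ x : X, 𝒳.src x ∈ Λset ∧ 𝒳.rng x ∈ Λset)
    (hGunits : ∀ x : X, 𝒳.src x ∈ Gset ∧ 𝒳.rng x ∈ Gset)
    (hΛcomp : ∀ a ∈ Λset, ∀ b ∈ Λset, 𝒳.src a = 𝒳.rng b → 𝒳.comp a b ∈ Λset)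
    (hGcomp : ∀ a ∈ Gset, ∀ b ∈ Gset, 𝒳.src a = 𝒳.rng b → 𝒳.comp a b ∈ Gset)
    (hfact : ∀ x : X, ∃! p : X × X, p.1 ∈ Λset ∧ p.2 ∈ Gset ∧
      𝒳.src p.1 = 𝒳.rng p.2 ∧ x = 𝒳.comp p.1 p.2)
    (hG : ∀ g ∈ Gset, ∃ g' ∈ Gset, 𝒳.src g' = 𝒳.rng g ∧ 𝒳.rng g' = 𝒳.src g ∧
      𝒳.comp g g' = 𝒳.rng g ∧ 𝒳.comp g' g = 𝒳.src g)
    (d : X → Fin (k + 1) → ℕ)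
    (hd_comp : ∀ a ∈ Λset, ∀ b ∈ Λset, 𝒳.src a = 𝒳.rng b →
      d (𝒳.comp a b) = d a + d b)
    (hfactorΛ : ∀ lam ∈ Λset, ∀ m n : Fin (k + 1) → ℕ, d lam = m + n →
      ∃! p : X × X, p.1 ∈ Λset ∧ p.2 ∈ Λset ∧ 𝒳.src p.1 = 𝒳.rng p.2 ∧
        lam = 𝒳.comp p.1 p.2 ∧ d p.1 = m ∧ d p.2 = n)
    (hdeg : ∀ g ∈ Gset, ∀ lam ∈ Λset, 𝒳.src g = 𝒳.rng lam →
      ∀ lam' ∈ Λset, ∀ g' ∈ Gset, 𝒳.src lam' = 𝒳.rng g' →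
        𝒳.comp g lam = 𝒳.comp lam' g' → d lam' = d lam)
    (hlc : ∀ i j : Fin (k + 1), i ≠ j → ∀ e ∈ Λset, d e = Pi.single i 1 →
      (∃ f ∈ Λset, 𝒳.rng f = 𝒳.rng e ∧ d f = Pi.single j 1) →
      ∃ f ∈ Λset, 𝒳.rng f = 𝒳.src e ∧ d f = Pi.single j 1) :
    ∀ Γset D : Set X,
      Γset = {lam | lam ∈ Λset ∧ d lam (Fin.last k) = 0} →
      D = {x | ∃ γ ∈ Γset, ∃ g ∈ Gset, 𝒳.src γ = 𝒳.rng g ∧ x = 𝒳.comp γ g} →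
      ∀ v : X, 𝒳.src v = v →
        ∀ F : Finset X, ↑F ⊆ D → (∀ f ∈ F, 𝒳.rng f = v) →
          (∀ c ∈ D, 𝒳.rng c = v →
            ∃ f ∈ F, (𝒳.idealIn D c ∩ 𝒳.idealIn D f).Nonempty) →
          ∀ x : X, 𝒳.rng x = v →
            ∃ f ∈ F, (𝒳.ideal x ∩ 𝒳.ideal f).Nonempty := by
  intro Γset D hΓ hD v hv F hFD hFv hE x hx
  classical
  -- units have degree zero
  have hdu : ∀ u : X, 𝒳.src u = u → u ∈ Λset → d u = 0 := by
    intro u hsu huΛ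
    have hru : 𝒳.rng u = u := by rw [← hsu, 𝒳.rng_src]
    have hcu : 𝒳.comp u u = u := by have := 𝒳.comp_src u; rwa [hsu] at this
    have hdc := hd_comp u huΛ u huΛ (by rw [hsu, hru])
    rw [hcu] at hdc
    funext i
    have h := congrFun hdc i
    simp only [Pi.add_apply, Pi.zero_apply] at h ⊢
    omega
  have hsrc0 : ∀ a : X, d (𝒳.src a) = 0 := fun a => hdu _ (𝒳.src_src a) (hΛunits a).1
  have hrng0 : ∀ a : X, d (𝒳.rng a) = 0 := fun a => hdu _ (𝒳.src_rng a) (hΛunits a).2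
  have hunit : ∀ a ∈ Λset, d a = 0 → 𝒳.src a = 𝒳.rng a := by
    intro a haΛ h
    obtain ⟨q, hq, hqu⟩ := hfactorΛ a haΛ 0 0 (by rw [h]; simp)
    have e1 := hqu (a, 𝒳.src a)
      ⟨haΛ, (hΛunits a).1, (𝒳.rng_src a).symm, (𝒳.comp_src a).symm, h, hsrc0 a⟩
    have e2 := hqu (𝒳.rng a, a)
      ⟨(hΛunits a).2, haΛ, 𝒳.src_rng a, (𝒳.rng_comp_self a).symm, hrng0 a, h⟩
    have e3 : (a, 𝒳.src a) = (𝒳.rng a, a) := e1.trans e2.symm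
    have e4 : a = 𝒳.rng a := congrArg Prod.fst e3
    have e5 : 𝒳.src a = a := congrArg Prod.snd e3
    rw [e5]; exact e4
  -- factor x = lam · g
  obtain ⟨⟨lam, g⟩, ⟨hlamΛ, hgG, hsl, hxe⟩, -⟩ := hfact x
  obtain ⟨g', hg'G, hg's, hg'r, hgg', hg'g⟩ := hG g hgG
  have hrlam : 𝒳.rng lam = v := by
    rw [← hx, hxe, 𝒳.rng_comp lam g hsl]
  -- the Γ-part function, the degree bound and the target degree
  set gp : X → X := fun z => ((hfact z).exists.choose).1 with hgp
  set N : Fin (k + 1) → ℕ := fun i => F.sup (fun f => d (gp f) i) with hN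
  set p : Fin (k + 1) → ℕ := fun i => max (d lam i) (N i) with hp
  -- Step A : extend lam to lam' which is "full up to p"
  obtain ⟨lam', hlam'Λ, ⟨σ, hσΛ, hσr, hlam'e⟩, hlam'le, hlam'def⟩ :=
    extend_aux 𝒳 Λset hΛunits hΛcomp d hd_comp p (∑ i, (p i - d lam i)) lam hlamΛ
      (fun i => by simp only [hp]; exact le_max_left _ _) le_rfl
  -- Step B : factor lam' = μ · ν with μ ∈ Γ, ν purely of last degree
  have hsplit : d lam' = (fun i => if i = Fin.last k then 0 else d lam' i)
      + Pi.single (Fin.last k) (d lam' (Fin.last k)) := by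
    funext i
    by_cases hi : i = Fin.last k <;> simp [Pi.single_apply, hi]
  obtain ⟨⟨μ, ν⟩, ⟨hμΛ, hνΛ, hμν, hlam'μν, hdμ, hdν⟩, -⟩ :=
    hfactorΛ lam' hlam'Λ _ _ hsplit
  have hμlast : d μ (Fin.last k) = 0 := by rw [hdμ]; simp
  have hμΓ : μ ∈ Γset := by rw [hΓ]; exact ⟨hμΛ, hμlast⟩
  have hrlam' : 𝒳.rng lam' = v := by rw [hlam'e, 𝒳.rng_comp lam σ hσr, hrlam]
  have hrμ : 𝒳.rng μ = v := by
    have h : 𝒳.rng lam' = 𝒳.rng μ := by rw [hlam'μν, 𝒳.rng_comp μ ν hμν]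
    rw [← h, hrlam']
  have hμD : μ ∈ D := by
    rw [hD]
    exact ⟨μ, hμΓ, 𝒳.src μ, (hGunits μ).1, (𝒳.rng_src μ).symm, (𝒳.comp_src μ).symm⟩
  -- apply exhaustivity in Γ ⋈ G
  obtain ⟨f, hfF, y, hy⟩ := hE μ hμD hrμ
  obtain ⟨hy1, hy2⟩ := hy
  obtain ⟨a, haD, hμa, hya⟩ := hy1
  obtain ⟨b, hbD, hfb, hyb⟩ := hy2
  have hfD := hFD hfF
  rw [hD] at hfD haD hbD
  obtain ⟨γf, hγfΓ, gf, hgfG, hsγf, hfe⟩ := hfD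
  obtain ⟨γa, hγaΓ, ha, haG, hsγa, hae⟩ := haD
  obtain ⟨γb, hγbΓ, hb, hbG, hsγb, hbe⟩ := hbD
  rw [hΓ] at hγfΓ hγaΓ hγbΓ
  obtain ⟨hγfΛ, hγfl⟩ := hγfΓ
  obtain ⟨hγaΛ, hγal⟩ := hγaΓ
  obtain ⟨hγbΛ, hγbl⟩ := hγbΓ
  -- μ-side factorisation of y
  have m2 : 𝒳.rng a = 𝒳.rng γa := by rw [hae, 𝒳.rng_comp γa ha hsγa]
  have m3 : 𝒳.src μ = 𝒳.rng γa := hμa.trans m2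
  have e5 : y = 𝒳.comp (𝒳.comp μ γa) ha := by
    rw [hya, hae]; exact (𝒳.assoc μ γa ha m3 hsγa).symm
  -- f-side factorisation of y
  have s1 : 𝒳.src f = 𝒳.src gf := by rw [hfe, 𝒳.src_comp γf gf hsγf]
  have s2 : 𝒳.rng b = 𝒳.rng γb := by rw [hbe, 𝒳.rng_comp γb hb hsγb]
  have s3 : 𝒳.src gf = 𝒳.rng γb := by rw [← s1, hfb, s2]
  have s4 : 𝒳.src (𝒳.comp gf γb) = 𝒳.src γb := 𝒳.src_comp gf γb s3
  have s5 : 𝒳.rng (𝒳.comp gf γb) = 𝒳.rng gf := 𝒳.rng_comp gf γb s3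
  obtain ⟨⟨γw, hw⟩, ⟨hγwΛ, hhwG, hsγw, hwe⟩, -⟩ := hfact (𝒳.comp gf γb)
  have hdγw : d γw = d γb := hdeg gf hgfG γb hγbΛ s3 γw hγwΛ hw hhwG hsγw hwe
  have sw : 𝒳.src hw = 𝒳.rng hb := by
    have h1 : 𝒳.src (𝒳.comp γw hw) = 𝒳.src hw := 𝒳.src_comp γw hw hsγw
    rw [← hwe] at h1
    rw [← h1, s4, hsγb]
  have sγfγw : 𝒳.src γf = 𝒳.rng γw := by
    have h1 : 𝒳.rng (𝒳.comp γw hw) = 𝒳.rng γw := 𝒳.rng_comp γw hw hsγw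
    rw [← hwe] at h1
    rw [hsγf, ← s5, h1]
  have sgfb : 𝒳.src gf = 𝒳.rng b := by rw [← s1, hfb]
  have s7 : 𝒳.src γw = 𝒳.rng (𝒳.comp hw hb) := by
    rw [𝒳.rng_comp hw hb sw]; exact hsγw
  have e4 : y = 𝒳.comp (𝒳.comp γf γw) (𝒳.comp hw hb) := by
    rw [hyb, hfe, 𝒳.assoc γf gf b hsγf sgfb, hbe, ← 𝒳.assoc gf γb hb s3 hsγb, hwe,
      𝒳.assoc γw hw hb hsγw sw, ← 𝒳.assoc γf γw (𝒳.comp hw hb) sγfγw s7]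
  -- uniqueness of the Λ ⋈ G factorisation of y
  have hμγaΛ : 𝒳.comp μ γa ∈ Λset := hΛcomp μ hμΛ γa hγaΛ m3
  have hγfγwΛ : 𝒳.comp γf γw ∈ Λset := hΛcomp γf hγfΛ γw hγwΛ sγfγw
  have zeq : 𝒳.comp μ γa = 𝒳.comp γf γw := by
    have huy := ExistsUnique.unique (hfact y)
      (y₁ := (𝒳.comp μ γa, ha)) (y₂ := (𝒳.comp γf γw, 𝒳.comp hw hb))
      ⟨hμγaΛ, haG, by rw [𝒳.src_comp μ γa m3]; exact hsγa, e5⟩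
      ⟨hγfγwΛ, hGcomp hw hhwG hb hbG sw,
        by rw [𝒳.src_comp γf γw sγfγw, 𝒳.rng_comp hw hb sw]; exact hsγw, e4⟩
    exact congrArg Prod.fst huy
  have dz1 : d (𝒳.comp μ γa) = d μ + d γa := hd_comp μ hμΛ γa hγaΛ m3
  have dz2 : d (𝒳.comp μ γa) = d γf + d γw := by
    rw [zeq]; exact hd_comp γf hγfΛ γw hγwΛ sγfγw
  have hγfN : ∀ i, d γf i ≤ N i := by
    intro i
    have hgpf : γf = gp f := by
      have hc := (hfact f).exists.choose_spec
      have h := ExistsUnique.unique (hfact f) (y₁ := (γf, gf))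
        (y₂ := (hfact f).exists.choose) ⟨hγfΛ, hgfG, hsγf, hfe⟩ hc
      exact congrArg Prod.fst h
    rw [hgpf]
    simp only [hN]
    exact Finset.le_sup (f := fun z => d (gp z) i) hfF
  -- Step C : d γf ≤ d μ, via local convexity
  have hγfμ : ∀ i, d γf i ≤ d μ i := by
    intro i
    by_contra hlt
    push_neg at hlt
    have hil : i ≠ Fin.last k := by
      intro h; rw [h] at hlt; rw [hμlast, hγfl] at hlt; omega
    have hd1 : d μ i + d γa i = d γf i + d γw i := by
      have h1 := congrFun dz1 i; have h2 := congrFun dz2 i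
      simp only [Pi.add_apply] at h1 h2; omega
    have hγai : 1 ≤ d γa i := by omega
    have hsum2 : d γa = Pi.single i 1 + (fun j => d γa j - (Pi.single i 1 : Fin (k + 1) → ℕ) j) := by
      funext j
      by_cases hj : j = i
      · simp only [Pi.add_apply, Pi.single_apply, if_pos hj]
        subst hj; omega
      · simp only [Pi.add_apply, Pi.single_apply, if_neg hj]
        omega
    obtain ⟨⟨e, ρ⟩, ⟨heΛ, hρΛ, hse, hγae, hde, hdρ⟩, -⟩ := hfactorΛ γa hγaΛ _ _ hsum2
    have hre : 𝒳.rng e = 𝒳.rng ν := by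
      rw [← hμν, m3, hγae, 𝒳.rng_comp e ρ hse]
    obtain ⟨e', he'Λ, hre', hde'⟩ := prop_aux 𝒳 Λset d hfactorΛ hlc hunit i hil
      (d lam' (Fin.last k)) ν hνΛ hdν ⟨e, heΛ, hre, hde⟩
    have hdefi : d lam' i < p i := by
      have h1 : d μ i = d lam' i := by rw [hdμ]; simp [hil]
      have h2 : d γf i ≤ N i := hγfN i
      have h3 : N i ≤ p i := by simp only [hp]; exact le_max_right _ _
      omega
    exact hlam'def i hdefi
      ⟨e', he'Λ, by rw [hre', hlam'μν, 𝒳.src_comp μ ν hμν], hde'⟩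
  -- Step E : γf is an initial segment of μ
  have hsum3 : d (𝒳.comp μ γa) = d γf + (fun j => d (𝒳.comp μ γa) j - d γf j) := by
    funext j
    have h2 := congrFun dz2 j
    simp only [Pi.add_apply] at h2 ⊢
    omega
  obtain ⟨pz, hpz, hpzu⟩ := hfactorΛ (𝒳.comp μ γa) hμγaΛ _ _ hsum3
  have Q1 := hpzu (γf, γw) ⟨hγfΛ, hγwΛ, sγfγw, zeq, rfl, by
    funext j
    have h2 := congrFun dz2 j
    simp only [Pi.add_apply] at h2
    simp only []
    omega⟩
  have hsum4 : d μ = d γf + (fun j => d μ j - d γf j) := by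
    funext j; have := hγfμ j; simp only [Pi.add_apply]; omega
  obtain ⟨⟨μ₁, μ₂⟩, ⟨hμ₁Λ, hμ₂Λ, hsμ₁, hμe, hdμ₁, hdμ₂⟩, -⟩ := hfactorΛ μ hμΛ _ _ hsum4
  have sμ₂γa : 𝒳.src μ₂ = 𝒳.rng γa := by
    rw [← m3, hμe, 𝒳.src_comp μ₁ μ₂ hsμ₁]
  have Q2 := hpzu (μ₁, 𝒳.comp μ₂ γa) ⟨hμ₁Λ, hΛcomp μ₂ hμ₂Λ γa hγaΛ sμ₂γa,
    (by rw [𝒳.rng_comp μ₂ γa sμ₂γa]; exact hsμ₁),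
    (by rw [hμe]; exact 𝒳.assoc μ₁ μ₂ γa hsμ₁ sμ₂γa),
    hdμ₁, by
      funext j
      have h1 := congrFun dz1 j
      have h2 := congrFun (hd_comp μ₂ hμ₂Λ γa hγaΛ sμ₂γa) j
      have h3 := congrFun hdμ₂ j
      have h4 := hγfμ j
      simp only [Pi.add_apply] at h1 h2
      simp only [] at h3 ⊢
      omega⟩
  have hγfμ₁ : γf = μ₁ := congrArg Prod.fst (Q1.trans Q2.symm)
  have sμ₂ν : 𝒳.src μ₂ = 𝒳.rng ν := by rw [← hμν, hμe, 𝒳.src_comp μ₁ μ₂ hsμ₁]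
  have hlam'2 : lam' = 𝒳.comp γf (𝒳.comp μ₂ ν) := by
    rw [hlam'μν, hμe, 𝒳.assoc μ₁ μ₂ ν hsμ₁ sμ₂ν, hγfμ₁]
  -- conclusion
  obtain ⟨gf', hgf'G, hgf's, hgf'r, hgfgf', hgf'gf⟩ := hG gf hgfG
  have hrτ : 𝒳.rng (𝒳.comp μ₂ ν) = 𝒳.rng gf := by
    rw [𝒳.rng_comp μ₂ ν sμ₂ν, ← hsγf, hγfμ₁, hsμ₁]
  have hgf'τ : 𝒳.src gf' = 𝒳.rng (𝒳.comp μ₂ ν) := by rw [hgf's, hrτ]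
  have hg'σ : 𝒳.src g' = 𝒳.rng σ := by rw [hg's, ← hsl]; exact hσr
  refine ⟨f, hfF, lam', ⟨𝒳.comp g' σ, ?_, ?_⟩, ⟨𝒳.comp gf' (𝒳.comp μ₂ ν), ?_, ?_⟩⟩
  · rw [hxe, 𝒳.src_comp lam g hsl, 𝒳.rng_comp g' σ hg'σ, hg'r]
  · rw [hxe, cancel_aux 𝒳 lam g g' σ hsl hg's hg'r hgg' hσr.symm]
    exact hlam'e
  · rw [hfe, 𝒳.src_comp γf gf hsγf, 𝒳.rng_comp gf' _ hgf'τ, hgf'r]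
  · rw [hfe, cancel_aux 𝒳 γf gf gf' (𝒳.comp μ₂ ν) hsγf hgf's hgf'r hgfgf'
      (by rw [hrτ, ← hsγf])]
    exact hlam'2
end
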